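/- arXiv:2312.06456 — 4 statements merged into one kernel-verified Lean document; each statement's English description precedes it below -/
import Mathlib

section
/- Let 0 < ε ≤ δ/2. In ℝⁿ, every open ball of diameter δ contains at least ⌈(δ/(4ε))ⁿ⌉ pairwise disjoint closed balls of diameter ε. -/
open Metric MeasureTheory Module
open scoped NNReal ENNReal

/-! A maximal `ε`-separated set of centres in the closed ball of radius `δ/4` is also an
`ε`-cover of it, so comparing Haar volumes it has at least `(δ/(4ε))ⁿ` points. The closed balls
of radius `ε/2` around these centres are pairwise disjoint, and they lie in the open ball of
radius `δ/2` as soon as `4ε < δ`; otherwise `⌈(δ/(4ε))ⁿ⌉ ≤ 1` and the ball of radius `ε/2`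
around `x` suffices. -/

theorem TotallyBounded.exists_finite_isSeparated_isCover {X : Type*} [PseudoEMetricSpace X]
    {ε : ℝ≥0} {A : Set X} (hA : TotallyBounded A) (hε : ε ≠ 0) :
    ∃ C ⊆ A, C.Finite ∧ IsSeparated ε C ∧ IsCover ε A C := by
  have hpack : packingNumber ε A ≠ ⊤ := by
    obtain ⟨N, -, hNfin, hN⟩ :=
      exists_finite_isCover_of_totallyBounded (ε := ε / 2) (by simpa using hε) hA
    refine ne_top_of_le_ne_top (hNfin.encard_lt_top.ne) ?_
    calc packingNumber ε A = packingNumber (2 * (ε / 2)) A := by rw [mul_div_cancel₀ _ two_ne_zero]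
      _ ≤ externalCoveringNumber (ε / 2) A := packingNumber_two_mul_le_externalCoveringNumber _ _
      _ ≤ N.encard := hN.externalCoveringNumber_le_encard
  refine ⟨maximalSeparatedSet ε A, maximalSeparatedSet_subset, ?_, isSeparated_maximalSeparatedSet,
    isCover_maximalSeparatedSet hpack⟩
  rw [← Set.encard_ne_top_iff, encard_maximalSeparatedSet hpack]
  exact hpack

variable {E : Type*} [NormedAddCommGroup E] [NormedSpace ℝ E] [FiniteDimensional ℝ E]

theorem Metric.IsCover.pow_finrank_le_card_mul_pow {ε : ℝ≥0} {x : E} {ρ : ℝ} (hρ : 0 ≤ ρ)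
    {C : Finset E} (hC : IsCover ε (closedBall x ρ) (C : Set E)) :
    ρ ^ finrank ℝ E ≤ C.card * (ε : ℝ) ^ finrank ℝ E := by
  borelize E
  obtain ⟨μ, _⟩ : ∃ μ : Measure E, μ.IsAddHaarMeasure := ⟨Measure.addHaar, inferInstance⟩
  have hμB : μ (closedBall 0 1) ≠ 0 := (measure_closedBall_pos μ 0 one_pos).ne'
  have hμB' : μ (closedBall 0 1) ≠ ⊤ := measure_closedBall_lt_top.ne
  have key : ENNReal.ofReal (ρ ^ finrank ℝ E) * μ (closedBall 0 1) ≤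
      ENNReal.ofReal (C.card * (ε : ℝ) ^ finrank ℝ E) * μ (closedBall 0 1) := calc
    _ = μ (closedBall x ρ) := (Measure.addHaar_closedBall' μ x hρ).symm
    _ ≤ μ (⋃ c ∈ C, closedBall c ε) := measure_mono (by simpa using hC.subset_iUnion_closedBall)
    _ ≤ ∑ c ∈ C, μ (closedBall c ε) := measure_biUnion_finset_le C _
    _ = _ := by
      simp only [Measure.addHaar_closedBall' μ _ ε.coe_nonneg, Finset.sum_const,
        nsmul_eq_mul, ENNReal.ofReal_mul (Nat.cast_nonneg _), ENNReal.ofReal_natCast, mul_assoc]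
  exact (ENNReal.ofReal_le_ofReal_iff (by positivity)).1
    ((ENNReal.mul_le_mul_iff_left hμB hμB').1 key)

theorem exists_separated_points_in_closedBall {ε ρ : ℝ} (hε : 0 < ε) (hρ : 0 ≤ ρ) (x : E) :
    ∃ c : Fin ⌈(ρ / ε) ^ finrank ℝ E⌉₊ → E,
      (∀ i, c i ∈ closedBall x ρ) ∧ Pairwise fun i j ↦ ε < dist (c i) (c j) := by
  obtain ⟨C, hCball, hCfin, hCsep, hCcov⟩ :=
    (isCompact_closedBall x ρ).totallyBounded.exists_finite_isSeparated_isCover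
      (ε := ε.toNNReal) (by simpa using hε)
  lift C to Finset E using hCfin
  have hcard : Fintype.card (Fin ⌈(ρ / ε) ^ finrank ℝ E⌉₊) ≤ Fintype.card C := by
    rw [Fintype.card_fin, Fintype.card_coe, Nat.ceil_le, div_pow, div_le_iff₀ (by positivity)]
    simpa [Real.coe_toNNReal _ hε.le] using hCcov.pow_finrank_le_card_mul_pow hρ
  obtain ⟨f⟩ := Function.Embedding.nonempty_of_card_le hcard
  refine ⟨fun i ↦ f i, fun i ↦ hCball (f i).2, fun i j hij ↦ ?_⟩
  have hsep : ENNReal.ofReal ε < edist (f i : E) (f j) :=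
    hCsep (f i).2 (f j).2 fun h ↦ hij (f.injective (Subtype.ext h))
  rw [edist_dist] at hsep
  exact (ENNReal.ofReal_lt_ofReal_iff_of_nonneg hε.le).1 hsep

/-- Let `0 < ε ≤ δ/2`. In `ℝⁿ`, every open ball of diameter `δ` contains at
least `⌈(δ/(4ε))ⁿ⌉` pairwise disjoint closed balls of diameter `ε`. -/
theorem ball_contains_disjoint_closedBalls (n : ℕ) (ε δ : ℝ) (hε : 0 < ε) (hεδ : ε ≤ δ / 2)
    (x : EuclideanSpace ℝ (Fin n)) :
    ∃ c : Fin ⌈(δ / (4 * ε)) ^ n⌉₊ → EuclideanSpace ℝ (Fin n),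
      (∀ i, Metric.closedBall (c i) (ε / 2) ⊆ Metric.ball x (δ / 2)) ∧
      Pairwise fun i j =>
        Disjoint (Metric.closedBall (c i) (ε / 2)) (Metric.closedBall (c j) (ε / 2)) := by
  rcases le_or_gt (δ / (4 * ε)) 1 with hsmall | hlarge
  · have hN : ⌈(δ / (4 * ε)) ^ n⌉₊ ≤ 1 :=
      Nat.ceil_le.2 (by exact_mod_cast pow_le_one₀ (div_nonneg (by linarith) (by linarith)) hsmall)
    exact ⟨fun _ ↦ x, fun _ ↦ closedBall_subset_ball (by linarith),
      fun i j hij ↦ (hij (Fin.ext (by omega))).elim⟩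
  · have h4ε : 4 * ε < δ := (one_lt_div (by positivity)).1 hlarge
    have hpoints := exists_separated_points_in_closedBall hε (by linarith : 0 ≤ δ / 4) x
    rw [finrank_euclideanSpace_fin, div_div] at hpoints
    obtain ⟨c, hc_mem, hc_sep⟩ := hpoints
    refine ⟨c, fun i ↦ closedBall_subset_ball' ?_, fun i j hij ↦ closedBall_disjoint_closedBall ?_⟩
    · linarith [mem_closedBall.1 (hc_mem i)]
    · linarith [hc_sep hij]
end

section
/- Let D = ∪_{k=1}^∞ [2^{-n_k}, 2^{-n_k+1}) for a strictly increasing sequence (n_k) of positive integers, and let S ⊆ ℕ. Then dim_D A_S = liminf_{k→∞} M_S(n_k), where M_S(m) = #(S ∩ {1,…,m})/m. -/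
open Metric Set Filter Bornology
open scoped ENNReal NNReal

/-- A scale set: a Sorgenfrey-open subset of `(0,∞)` with infimum `0`. -/
def IsScaleSet (D : Set ℝ) : Prop :=
  D ⊆ Set.Ioi 0 ∧ (∀ ε > 0, ∃ t ∈ D, t < ε) ∧
    ∀ t ∈ D, ∃ δ > 0, Set.Ico t (t + δ) ⊆ D

/-- The `s`-dimensional `D`-diameter restricted Hausdorff content. -/
noncomputable def restContent {X : Type*} [MetricSpace X] (D : Set ℝ) (s : ℝ) (E : Set X) :
    ℝ≥0∞ :=
  ⨅ (t : ℕ → Set X) (_ : E ⊆ ⋃ i, t i) (_ : ∀ i, Metric.diam (t i) ∈ D),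
    ∑' i, ENNReal.ofReal (Metric.diam (t i)) ^ s

/-- The `D`-diameter restricted Hausdorff dimension. -/
noncomputable def restDim {X : Type*} [MetricSpace X] (D : Set ℝ) (E : Set X) : ℝ≥0∞ :=
  ⨅ (s : ℝ≥0) (_ : restContent D (s : ℝ) E = 0), (s : ℝ≥0∞)

/-- The set `A_S = { Σ_{i∈S} x_i 2^{-i} : x_i ∈ {0,1} }` for `S ⊆ ℕ`. -/
def AS (S : Set ℕ) : Set ℝ :=
  {x | ∃ a : ℕ → ℝ, (∀ i, a i = 0 ∨ a i = 1) ∧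
    x = ∑' i : ℕ, Set.indicator S a i * (2 : ℝ) ^ (-(i : ℤ))}

/-- `M_S(k) = #(S ∩ {1,…,k}) / k`. -/
noncomputable def MS (S : Set ℕ) (k : ℕ) : ℝ := ((S ∩ Set.Icc 1 k).ncard : ℝ) / k

open Finset in
section
namespace RestDimAux

noncomputable section
open Classical

def w (i : ℕ) : ℝ := (2 : ℝ) ^ (-(i : ℤ))

lemma w_pos (i : ℕ) : 0 < w i := zpow_pos two_pos _
lemma w_nonneg (i : ℕ) : 0 ≤ w i := (w_pos i).le

lemma w_eq (i : ℕ) : w i = (1/2 : ℝ) ^ i := by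
  rw [w, zpow_neg, zpow_natCast, ← inv_pow, one_div]

lemma summable_w : Summable w := by
  have := summable_geometric_of_lt_one (r := (1/2:ℝ)) (by norm_num) (by norm_num)
  exact this.congr fun i => (w_eq i).symm

lemma two_mul_w (n : ℕ) : 2 * w (n + 1) = w n := by
  rw [w_eq, w_eq, pow_succ]; ring

lemma tsum_w_add (n : ℕ) : ∑' i, w (i + n) = 2 * w n := by
  have h : ∀ i, w (i + n) = w n * (1/2:ℝ)^i := by
    intro i; rw [w_eq, w_eq, pow_add]; ring
  rw [tsum_congr h, tsum_mul_left, tsum_geometric_two]; ring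

variable (S : Set ℕ)

def term (b : ℕ → Bool) (i : ℕ) : ℝ := if i ∈ S ∧ b i = true then w i else 0

lemma term_nonneg (b : ℕ → Bool) (i : ℕ) : 0 ≤ term S b i := by
  unfold term; split <;> simp [w_nonneg]

lemma term_le (b : ℕ → Bool) (i : ℕ) : term S b i ≤ w i := by
  unfold term; split <;> simp [w_nonneg]

lemma summable_term (b : ℕ → Bool) : Summable (term S b) :=
  Summable.of_nonneg_of_le (term_nonneg S b) (term_le S b) summable_w

def g (b : ℕ → Bool) : ℝ := ∑' i, term S b i

lemma continuous_g : Continuous (g S) := by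
  apply continuous_tsum (u := w) _ summable_w
  · intro i b
    rw [Real.norm_eq_abs, abs_of_nonneg (term_nonneg S b i)]
    exact term_le S b i
  · intro i
    have h1 : Continuous fun b : ℕ → Bool => b i := continuous_apply i
    exact Continuous.comp (continuous_of_discreteTopology
      (f := fun v : Bool => if i ∈ S ∧ v = true then w i else 0)) h1

lemma range_g : Set.range (g S) = AS S := by
  ext x
  constructor
  · rintro ⟨b, rfl⟩
    refine ⟨fun i => if b i then 1 else 0, fun i => by by_cases h : b i <;> simp [h], ?_⟩
    refine tsum_congr fun i => ?_
    rw [Set.indicator]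
    by_cases hiS : i ∈ S <;> by_cases hb : b i = true <;>
      simp [term, hiS, hb, w]
  · rintro ⟨a, ha, rfl⟩
    refine ⟨fun i => if a i = 1 then true else false, ?_⟩
    refine tsum_congr fun i => ?_
    rw [Set.indicator, term]
    by_cases hiS : i ∈ S
    · rcases ha i with h0 | h1
      · have hne : ¬ (a i = 1) := by rw [h0]; norm_num
        simp [hiS, h0, hne]
      · simp [hiS, h1, w]
    · simp [hiS]

lemma isCompact_AS : IsCompact (AS S) := by
  rw [← range_g]
  exact isCompact_range (continuous_g S)

def Fn (n : ℕ) : Finset ℕ := (Finset.Icc 1 n).filter (· ∈ S)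

def cnt (n : ℕ) : ℕ := (Fn S n).card

lemma Fn_subset_Icc (n : ℕ) : Fn S n ⊆ Finset.Icc 1 n := Finset.filter_subset _ _

lemma mem_Fn {n i : ℕ} : i ∈ Fn S n ↔ (1 ≤ i ∧ i ≤ n) ∧ i ∈ S := by
  simp [Fn, Finset.mem_filter, Finset.mem_Icc]

lemma Fn_mono {m n : ℕ} (h : m ≤ n) : Fn S m ⊆ Fn S n := by
  intro i hi; rw [mem_Fn] at *; exact ⟨⟨hi.1.1, hi.1.2.trans h⟩, hi.2⟩
lemma cnt_mono {m n : ℕ} (h : m ≤ n) : cnt S m ≤ cnt S n :=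
  Finset.card_le_card (Fn_mono S h)

def val (T : Finset ℕ) : ℝ := ∑ i ∈ T, w i

lemma val_nonneg (T : Finset ℕ) : 0 ≤ val T :=
  Finset.sum_nonneg fun i _ => w_nonneg i

def K (n : ℕ) (T : Finset ℕ) : ℕ := ∑ i ∈ T, 2 ^ (n - i)

lemma val_eq_K {n : ℕ} {T : Finset ℕ} (hT : T ⊆ Finset.Icc 1 n) :
    val T = (K n T : ℝ) * w n := by
  rw [val, K, Nat.cast_sum, Finset.sum_mul]
  refine Finset.sum_congr rfl fun i hi => ?_
  have hin : i ≤ n := (Finset.mem_Icc.1 (hT hi)).2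
  rw [w, w]
  push_cast
  rw [← zpow_natCast (2:ℝ) (n - i), ← zpow_add₀ (two_ne_zero)]
  congr 1
  omega

lemma K_inj {n : ℕ} {T T' : Finset ℕ} (hT : T ⊆ Finset.Icc 1 n) (hT' : T' ⊆ Finset.Icc 1 n)
    (h : K n T = K n T') : T = T' := by
  have key : ∀ U : Finset ℕ, U ⊆ Finset.Icc 1 n →
      K n U = ∑ j ∈ U.image (n - ·), 2 ^ j := by
    intro U hU
    rw [Finset.sum_image (fun a ha b hb hab => by
      have ha' : a ≤ n := (Finset.mem_Icc.1 (hU ha)).2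
      have hb' : b ≤ n := (Finset.mem_Icc.1 (hU hb)).2
      omega)]
    rfl
  have himg : T.image (n - ·) = T'.image (n - ·) := by
    apply geomSum_injective le_rfl
    simp only
    rw [← key T hT, ← key T' hT', h]
  have hrec : ∀ U : Finset ℕ, U ⊆ Finset.Icc 1 n → (U.image (n - ·)).image (n - ·) = U := by
    intro U hU
    rw [Finset.image_image]
    have : ∀ a ∈ U, ((n - ·) ∘ (n - ·)) a = id a := by
      intro a ha
      have : a ≤ n := (Finset.mem_Icc.1 (hU ha)).2
      simp only [Function.comp_apply, id_eq]
      omega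
    rw [Finset.image_congr this, Finset.image_id]
  rw [← hrec T hT, ← hrec T' hT', himg]

lemma val_inj {n : ℕ} {T T' : Finset ℕ} (hT : T ⊆ Finset.Icc 1 n) (hT' : T' ⊆ Finset.Icc 1 n)
    (h : val T = val T') : T = T' := by
  apply K_inj hT hT'
  have := (val_eq_K hT).symm.trans (h.trans (val_eq_K hT'))
  have hw := w_pos n
  have h2 : (K n T : ℝ) = K n T' := mul_right_cancel₀ (ne_of_gt hw) this
  exact_mod_cast h2

/-- window counting: the number of subsets of `Fn S n` whose value lies within `r ≤ 3 w n`
of a center `c` is at most `7`. -/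
lemma card_window {n : ℕ} (c : ℝ) :
    (((Fn S n).powerset).filter (fun T => |val T - c| ≤ 3 * w n)).card ≤ 7 := by
  classical
  set P := ((Fn S n).powerset).filter (fun T => |val T - c| ≤ 3 * w n) with hP
  have hsub : ∀ T ∈ P, T ⊆ Finset.Icc 1 n := by
    intro T hT
    rw [hP, Finset.mem_filter, Finset.mem_powerset] at hT
    exact hT.1.trans (Fn_subset_Icc S n)
  -- map to integers
  have hinj : Set.InjOn (fun T => (K n T : ℤ)) P := by
    intro T hT T' hT' h
    simp only at h
    exact K_inj (hsub T hT) (hsub T' hT') (by exact_mod_cast h)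
  have hmaps : ∀ T ∈ P, (K n T : ℤ) ∈ Finset.Icc (⌈(c - 3 * w n) / w n⌉) (⌈(c - 3 * w n) / w n⌉ + 6) := by
    intro T hT
    have hval : val T = (K n T : ℝ) * w n := val_eq_K (hsub T hT)
    rw [hP, Finset.mem_filter] at hT
    have habs := abs_le.1 hT.2
    have hw := w_pos n
    rw [Finset.mem_Icc]
    have h1 : (c - 3 * w n) / w n ≤ (K n T : ℝ) := by
      rw [div_le_iff₀ hw]
      nlinarith [habs.1, habs.2]
    have h2 : ((K n T : ℝ) - 6) * w n ≤ c - 3 * w n := by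
      nlinarith [habs.2]
    have h2' : (K n T : ℝ) - 6 ≤ (c - 3 * w n) / w n := (le_div_iff₀ hw).2 h2
    constructor
    · exact Int.ceil_le.2 (by exact_mod_cast h1)
    · have h3 : (K n T : ℝ) ≤ (⌈(c - 3 * w n) / w n⌉ : ℝ) + 6 := by
        have := Int.le_ceil ((c - 3 * w n) / w n)
        linarith
      exact_mod_cast h3
  calc P.card ≤ (Finset.Icc (⌈(c - 3 * w n) / w n⌉) (⌈(c - 3 * w n) / w n⌉ + 6)).card :=
        Finset.card_le_card_of_injOn _ hmaps hinj
    _ ≤ 7 := by rw [Int.card_Icc]; omega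

lemma sum_range_term (hS : 0 ∉ S) (b : ℕ → Bool) (n : ℕ) :
    ∑ i ∈ Finset.range (n+1), term S b i = val ((Fn S n).filter (fun i => b i = true)) := by
  simp only [term]
  rw [← Finset.sum_filter (fun i => i ∈ S ∧ b i = true) w]
  rw [val]
  congr 1
  ext i
  simp only [Finset.mem_filter, Finset.mem_range, mem_Fn]
  constructor
  · rintro ⟨h1, h2, h3⟩
    have hi0 : i ≠ 0 := fun h => hS (h ▸ h2)
    exact ⟨⟨⟨by omega, by omega⟩, h2⟩, h3⟩
  · rintro ⟨⟨⟨h1, h2⟩, h3⟩, h4⟩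
    exact ⟨by omega, h3, h4⟩

lemma summable_term_add (b : ℕ → Bool) (m : ℕ) : Summable fun i => term S b (i + m) :=
  (summable_nat_add_iff m).2 (summable_term S b)

lemma tail_nonneg (b : ℕ → Bool) (m : ℕ) : 0 ≤ ∑' i, term S b (i + m) :=
  tsum_nonneg fun i => term_nonneg S b _

lemma tail_le (b : ℕ → Bool) (n : ℕ) : ∑' i, term S b (i + (n+1)) ≤ w n := by
  have h1 : ∑' i, term S b (i + (n+1)) ≤ ∑' i, w (i + (n+1)) :=
    Summable.tsum_le_tsum (fun i => term_le S b _) (summable_term_add S b _)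
      ((summable_nat_add_iff _).2 summable_w)
  rw [tsum_w_add] at h1
  exact h1.trans_eq (two_mul_w n)

lemma g_decomp (hS : 0 ∉ S) (b : ℕ → Bool) (n : ℕ) :
    g S b = val ((Fn S n).filter (fun i => b i = true)) + ∑' i, term S b (i + (n+1)) := by
  rw [g, ← Summable.sum_add_tsum_nat_add (n+1) (summable_term S b), sum_range_term S hS b n]

lemma g_indicator {N : ℕ} {T : Finset ℕ} (hT : T ⊆ Fn S N) :
    g S (fun i => if i ∈ T then true else false) = val T := by
  rw [g, tsum_eq_sum (s := T) (fun i hi => by simp [term, hi])]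
  refine Finset.sum_congr rfl fun i hi => ?_
  have hiS : i ∈ S := ((mem_Fn S).1 (hT hi)).2
  simp [term, hi, hiS]

lemma val_mem_AS {N : ℕ} {T : Finset ℕ} (hT : T ⊆ Fn S N) : val T ∈ AS S := by
  rw [← range_g]; exact ⟨_, g_indicator S hT⟩

lemma sum_w_Icc (m N : ℕ) (h : m ≤ N) : ∑ i ∈ Finset.Icc (m+1) N, w i = w m - w N := by
  induction N with
  | zero =>
    have hm : m = 0 := by omega
    subst hm; simp
  | succ N ih =>
    rcases Nat.lt_or_ge N m with hN | hN
    · have hmN : m = N + 1 := by omega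
      subst hmN
      simp
    · rw [Finset.sum_Icc_succ_top (by omega), ih hN, ← two_mul_w N]
      ring

lemma val_le_w {U : Finset ℕ} {m N : ℕ} (hmN : m ≤ N) (hU : U ⊆ Finset.Icc (m+1) N) :
    val U ≤ w m := by
  have h1 : val U ≤ ∑ i ∈ Finset.Icc (m+1) N, w i :=
    Finset.sum_le_sum_of_subset_of_nonneg hU (fun i _ _ => w_nonneg i)
  rw [sum_w_Icc m N hmN] at h1
  have := w_pos N
  linarith

lemma fiber_card {N mj : ℕ} (hmN : mj ≤ N) (Q : Finset (Finset ℕ))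
    (hQP : Q ⊆ (Fn S N).powerset) (c : ℝ)
    (hQc : ∀ T ∈ Q, |val T - c| < 2 * w mj) :
    Q.card ≤ 7 * 2 ^ (cnt S N - cnt S mj) := by
  classical
  set W := ((Fn S mj).powerset).filter (fun T => |val T - c| ≤ 3 * w mj) with hW
  set R := (Fn S N \ Fn S mj).powerset with hR
  have hcard : (W ×ˢ R).card ≤ 7 * 2 ^ (cnt S N - cnt S mj) := by
    rw [Finset.card_product]
    have h1 : W.card ≤ 7 := card_window S c
    have h2 : R.card = 2 ^ (cnt S N - cnt S mj) := by
      rw [hR, Finset.card_powerset, Finset.card_sdiff_of_subset (Fn_mono S hmN)]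
      rfl
    calc W.card * R.card ≤ 7 * R.card := Nat.mul_le_mul_right _ h1
      _ = 7 * 2 ^ (cnt S N - cnt S mj) := by rw [h2]
  refine le_trans ?_ hcard
  apply Finset.card_le_card_of_injOn (fun T => (T ∩ Fn S mj, T \ Fn S mj))
  · intro T hT
    have hTN : T ⊆ Fn S N := Finset.mem_powerset.1 (hQP hT)
    rw [Finset.mem_coe, Finset.mem_product]
    constructor
    · rw [hW, Finset.mem_filter, Finset.mem_powerset]
      refine ⟨Finset.inter_subset_right, ?_⟩
      have hdecomp : val (T ∩ Fn S mj) + val (T \ Fn S mj) = val T :=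
        Finset.sum_inter_add_sum_sdiff T (Fn S mj) w
      have hsub : T \ Fn S mj ⊆ Finset.Icc (mj+1) N := by
        intro i hi
        rw [Finset.mem_sdiff] at hi
        have h1 := (mem_Fn S).1 (hTN hi.1)
        obtain ⟨⟨hi1, hiN⟩, hiS⟩ := h1
        have h2 : ¬ (i ≤ mj) := fun hle => hi.2 ((mem_Fn S).2 ⟨⟨hi1, hle⟩, hiS⟩)
        rw [Finset.mem_Icc]
        omega
      have htail1 : 0 ≤ val (T \ Fn S mj) := val_nonneg _
      have htail2 : val (T \ Fn S mj) ≤ w mj := val_le_w hmN hsub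
      have hc := hQc T hT
      rw [abs_lt] at hc
      rw [abs_le]
      constructor <;> nlinarith
    · rw [hR, Finset.mem_powerset]
      exact Finset.sdiff_subset_sdiff hTN (le_refl _)
  · intro T hT T' hT' h
    rw [Prod.mk.injEq] at h
    have : T ∩ Fn S mj ∪ T \ Fn S mj = T' ∩ Fn S mj ∪ T' \ Fn S mj := by
      rw [h.1, h.2]
    have hrec : ∀ U : Finset ℕ, U ∩ Fn S mj ∪ U \ Fn S mj = U := by
      intro U
      ext i
      simp only [Finset.mem_union, Finset.mem_inter, Finset.mem_sdiff]
      tauto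
    rwa [hrec, hrec] at this

lemma counting (hS : 0 ∉ S) {ι : Type} (J : Finset ι) (V : ι → Set ℝ) (m : ι → ℕ)
    (hcov : AS S ⊆ ⋃ j ∈ J, V j)
    (hdiam : ∀ j ∈ J, ∀ x ∈ V j, ∀ y ∈ V j, |x - y| < 2 * w (m j)) :
    (1 : ℝ) ≤ ∑ j ∈ J, 7 * (1/2 : ℝ) ^ (cnt S (m j)) := by
  classical
  set N := J.sup m with hN
  have hmN : ∀ j ∈ J, m j ≤ N := fun j hj => Finset.le_sup hj
  set P := (Fn S N).powerset with hP
  -- choice of covering index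
  have hex : ∀ T : Finset ℕ, ∃ j, T ∈ P → j ∈ J ∧ val T ∈ V j := by
    intro T
    by_cases hT : T ∈ P
    · have hmem : val T ∈ AS S := val_mem_AS S (Finset.mem_powerset.1 hT)
      have := hcov hmem
      simp only [Set.mem_iUnion] at this
      obtain ⟨j, hj, hVj⟩ := this
      exact ⟨j, fun _ => ⟨hj, hVj⟩⟩
    · obtain ⟨j₀, hj₀, _⟩ := Set.mem_iUnion₂.1 (hcov (val_mem_AS S (Finset.empty_subset (Fn S 0)) : val (∅ : Finset ℕ) ∈ AS S))
      exact ⟨j₀, fun h => absurd h hT⟩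
  choose φ hφ using hex
  have hφJ : ∀ T ∈ P, φ T ∈ J := fun T hT => (hφ T hT).1
  have hφV : ∀ T ∈ P, val T ∈ V (φ T) := fun T hT => (hφ T hT).2
  have hcard := Finset.card_eq_sum_card_fiberwise (f := φ) (t := J) hφJ
  -- per fiber bound
  have hfib : ∀ j ∈ J, (P.filter (fun T => φ T = j)).card ≤ 7 * 2 ^ (cnt S N - cnt S (m j)) := by
    intro j hj
    set Q := P.filter (fun T => φ T = j) with hQ
    rcases Q.eq_empty_or_nonempty with hQe | ⟨T₀, hT₀⟩
    · rw [hQe]; simp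
    · have hT₀' := hT₀
      rw [hQ, Finset.mem_filter] at hT₀'
      have hc₀ : val T₀ ∈ V j := hT₀'.2 ▸ hφV T₀ hT₀'.1
      apply fiber_card S (hmN j hj) Q (Finset.filter_subset _ _) (val T₀)
      intro T hT
      have hT' := hT
      rw [hQ, Finset.mem_filter] at hT'
      have hcT : val T ∈ V j := hT'.2 ▸ hφV T hT'.1
      exact hdiam j hj _ hcT _ hc₀
  have htotal : (2:ℕ) ^ cnt S N ≤ ∑ j ∈ J, 7 * 2 ^ (cnt S N - cnt S (m j)) := by
    have hPc : P.card = 2 ^ cnt S N := by rw [hP, Finset.card_powerset]; rfl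
    rw [← hPc, hcard]
    exact Finset.sum_le_sum hfib
  -- cast to ℝ and divide
  have hreal : (2:ℝ) ^ cnt S N ≤ ∑ j ∈ J, 7 * ((2:ℝ) ^ cnt S N * (1/2) ^ cnt S (m j)) := by
    have := (Nat.cast_le (α := ℝ)).2 htotal
    push_cast at this
    refine this.trans_eq (Finset.sum_congr rfl fun j hj => ?_)
    congr 1
    have hle : cnt S (m j) ≤ cnt S N := cnt_mono S (hmN j hj)
    rw [pow_sub₀ (2:ℝ) two_ne_zero hle, div_eq_mul_inv, ← inv_pow]
    norm_num
  have hX : (0:ℝ) < 2 ^ cnt S N := by positivity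
  have : (2:ℝ) ^ cnt S N ≤ 2 ^ cnt S N * ∑ j ∈ J, 7 * (1/2) ^ cnt S (m j) := by
    rw [Finset.mul_sum]
    refine hreal.trans_eq (Finset.sum_congr rfl fun j hj => by ring)
  exact (le_mul_iff_one_le_right hX).1 this

lemma two_zpow_succ (n : ℕ) : (2:ℝ) ^ (-(n:ℤ) + 1) = 2 * w n := by
  rw [w, zpow_add₀ (two_ne_zero), zpow_one]; ring

lemma w_rpow (n : ℕ) : w n = (2:ℝ) ^ (-(n:ℝ)) := by
  rw [w, ← Real.rpow_intCast]
  norm_num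

lemma half_pow_rpow (c : ℕ) : ((1/2 : ℝ)) ^ c = (2:ℝ) ^ (-(c:ℝ)) := by
  rw [Real.rpow_neg (by norm_num), Real.rpow_natCast, one_div, inv_pow]

lemma est (nk : ℕ → ℕ) (hmono : StrictMono nk) (s : ℝ) (hs0 : 0 ≤ s) (K0 : ℕ)
    (hK0 : ∀ k, K0 ≤ k → s * nk k ≤ cnt S (nk k)) (k : ℕ) (d : ℝ)
    (hd : w (nk k) ≤ d) :
    (1/2:ℝ) ^ cnt S (nk k) ≤ (2:ℝ) ^ (s * nk K0) * d ^ s := by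
  have hwpos := w_pos (nk k)
  have hd0 : (0:ℝ) < d := lt_of_lt_of_le hwpos hd
  have h1 : (w (nk k) : ℝ) ^ s ≤ d ^ s := Real.rpow_le_rpow (w_nonneg _) hd hs0
  have h2 : (w (nk k) : ℝ) ^ s = (2:ℝ) ^ (-(nk k : ℝ) * s) := by
    rw [w_rpow, ← Real.rpow_mul (by norm_num)]
  have h3 : (1/2:ℝ) ^ cnt S (nk k) ≤ (2:ℝ) ^ (s * nk K0 + (-(nk k : ℝ) * s)) := by
    rw [half_pow_rpow]
    apply Real.rpow_le_rpow_of_exponent_le one_le_two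
    rcases le_or_gt K0 k with hk | hk
    · have := hK0 k hk
      have hnn : (0:ℝ) ≤ s * nk K0 := by positivity
      nlinarith
    · have hle : (nk k : ℝ) ≤ nk K0 := by
        exact_mod_cast (hmono.le_iff_le.2 hk.le)
      have hc0 : (0:ℝ) ≤ (cnt S (nk k) : ℝ) := by positivity
      nlinarith
  calc (1/2:ℝ) ^ cnt S (nk k) ≤ (2:ℝ) ^ (s * nk K0 + (-(nk k : ℝ) * s)) := h3
    _ = (2:ℝ) ^ (s * nk K0) * (w (nk k)) ^ s := by
        rw [Real.rpow_add (by norm_num), h2]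
    _ ≤ (2:ℝ) ^ (s * nk K0) * d ^ s := by
        have : (0:ℝ) ≤ (2:ℝ) ^ (s * nk K0) := (Real.rpow_pos_of_pos two_pos _).le
        nlinarith

lemma content_pos (hS : 0 ∉ S) (nk : ℕ → ℕ) (hmono : StrictMono nk)
    (s : ℝ) (hs0 : 0 ≤ s) (K0 : ℕ) (hK0 : ∀ k, K0 ≤ k → s * nk k ≤ cnt S (nk k)) :
    restContent (⋃ k, Set.Ico ((2 : ℝ) ^ (-(nk k : ℤ))) ((2 : ℝ) ^ (-(nk k : ℤ) + 1))) s
      (AS S) ≠ 0 := by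
  classical
  set C : ℝ := (2:ℝ) ^ (s * nk K0) with hC
  have hCpos : 0 < C := Real.rpow_pos_of_pos two_pos _
  have key : ENNReal.ofReal (1/(7*C)) ≤
      restContent (⋃ k, Set.Ico ((2 : ℝ) ^ (-(nk k : ℤ))) ((2 : ℝ) ^ (-(nk k : ℤ) + 1))) s
        (AS S) := by
    rw [restContent]
    refine le_iInf fun t => le_iInf fun hcov => le_iInf fun hmem => ?_
    -- extract scales
    have hscale : ∀ i, ∃ k, w (nk k) ≤ diam (t i) ∧ diam (t i) < 2 * w (nk k) := by
      intro i
      have := hmem i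
      rw [Set.mem_iUnion] at this
      obtain ⟨k, hk⟩ := this
      rw [two_zpow_succ] at hk
      exact ⟨k, (Set.mem_Ico.1 hk).1, (Set.mem_Ico.1 hk).2⟩
    choose κ hκ1 hκ2 using hscale
    have hdpos : ∀ i, 0 < diam (t i) := fun i => lt_of_lt_of_le (w_pos _) (hκ1 i)
    have hbdd : ∀ i, Bornology.IsBounded (t i) := by
      intro i
      by_contra hb
      have := Metric.diam_eq_zero_of_unbounded hb
      have := hdpos i
      linarith
    set δ : ℕ → ℝ := fun i => (2 * w (nk (κ i)) - diam (t i))/2 with hδ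
    have hδpos : ∀ i, 0 < δ i := fun i => by
      have := hκ2 i; rw [hδ]; dsimp; linarith
    set V : ℕ → Set ℝ := fun i => Metric.thickening (δ i) (t i) with hV
    have hVopen : ∀ i, IsOpen (V i) := fun i => Metric.isOpen_thickening
    have hsubV : ∀ i, t i ⊆ V i := fun i => Metric.self_subset_thickening (hδpos i) _
    have hVdiam : ∀ i, ∀ x ∈ V i, ∀ y ∈ V i, |x - y| < 2 * w (nk (κ i)) := by
      intro i x hx y hy
      obtain ⟨a, ha, hxa⟩ := Metric.mem_thickening_iff.1 hx
      obtain ⟨b, hb, hyb⟩ := Metric.mem_thickening_iff.1 hy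
      have hab : dist a b ≤ diam (t i) := Metric.dist_le_diam_of_mem (hbdd i) ha hb
      have : dist x y ≤ dist x a + dist a b + dist b y := dist_triangle4 x a b y
      rw [Real.dist_eq] at this
      have hby : dist b y = dist y b := dist_comm b y
      rw [hδ] at hxa hyb
      calc |x - y| ≤ dist x a + dist a b + dist b y := this
        _ < (2 * w (nk (κ i)) - diam (t i))/2 + diam (t i)
            + (2 * w (nk (κ i)) - diam (t i))/2 := by
            dsimp at hxa hyb ⊢
            rw [hby]
            linarith
        _ = 2 * w (nk (κ i)) := by ring
    -- finite subcover
    have hcov' : AS S ⊆ ⋃ i, V i := hcov.trans (Set.iUnion_mono hsubV)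
    obtain ⟨J, hJ⟩ := (isCompact_AS S).elim_finite_subcover V hVopen hcov'
    -- counting
    have hcount : (1:ℝ) ≤ ∑ i ∈ J, 7 * (1/2:ℝ) ^ cnt S (nk (κ i)) :=
      counting S hS J V (fun i => nk (κ i)) hJ (fun i _ => hVdiam i)
    have hsum : 1/(7*C) ≤ ∑ i ∈ J, diam (t i) ^ s := by
      have hstep : ∀ i ∈ J, 7 * (1/2:ℝ) ^ cnt S (nk (κ i)) ≤ 7 * C * diam (t i) ^ s := by
        intro i _
        have := est S nk hmono s hs0 K0 hK0 (κ i) (diam (t i)) (hκ1 i)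
        nlinarith
      have h1 : (1:ℝ) ≤ ∑ i ∈ J, 7 * C * diam (t i) ^ s :=
        hcount.trans (Finset.sum_le_sum hstep)
      rw [div_le_iff₀ (by positivity)]
      calc (1:ℝ) ≤ ∑ i ∈ J, 7 * C * diam (t i) ^ s := h1
        _ = (∑ i ∈ J, diam (t i) ^ s) * (7 * C) := by
            rw [Finset.sum_mul]
            exact Finset.sum_congr rfl fun i _ => by ring
    -- transfer to ENNReal
    calc ENNReal.ofReal (1/(7*C)) ≤ ENNReal.ofReal (∑ i ∈ J, diam (t i) ^ s) :=
          ENNReal.ofReal_le_ofReal hsum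
      _ = ∑ i ∈ J, ENNReal.ofReal (diam (t i) ^ s) :=
          ENNReal.ofReal_sum_of_nonneg fun i _ => Real.rpow_nonneg (diam_nonneg) s
      _ = ∑ i ∈ J, ENNReal.ofReal (diam (t i)) ^ s := by
          refine Finset.sum_congr rfl fun i _ => ?_
          rw [ENNReal.ofReal_rpow_of_pos (hdpos i)]
      _ ≤ ∑' i, ENNReal.ofReal (diam (t i)) ^ s := ENNReal.sum_le_tsum J
  intro h
  rw [h] at key
  have : (0:ℝ) < 1/(7*C) := by positivity
  have := ENNReal.ofReal_pos.2 this
  exact absurd (le_antisymm key zero_le) (ne_of_gt this)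

lemma ncard_eq (n : ℕ) : (S ∩ Set.Icc 1 n).ncard = cnt S n := by
  rw [cnt, ← Set.ncard_coe_finset]
  congr 1
  ext i
  simp only [Finset.coe_filter, Set.mem_setOf_eq, Set.mem_inter_iff, Set.mem_Icc, Fn,
    Finset.mem_Icc]
  tauto

lemma MS_eq (n : ℕ) : MS S n = (cnt S n : ℝ) / n := by rw [MS, ncard_eq]

lemma nk_add_le (nk : ℕ → ℕ) (hmono : StrictMono nk) (q j : ℕ) : nk q + j ≤ nk (q + j) := by
  induction j with
  | zero => simp
  | succ j ih =>
    have h2 := hmono (Nat.lt_succ_self (q + j))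
    have heq : (q + j).succ = q + (j + 1) := by omega
    rw [heq] at h2
    omega

lemma w_antitone {m n : ℕ} (h : m ≤ n) : w n ≤ w m := by
  rw [w_eq, w_eq]
  exact pow_le_pow_of_le_one (by norm_num) (by norm_num) h

lemma cover_bound (hS : 0 ∉ S) (nk : ℕ → ℕ) (hmono : StrictMono nk) (s : ℝ) (hs : 0 < s)
    (k q : ℕ) :
    restContent (⋃ k, Set.Ico ((2 : ℝ) ^ (-(nk k : ℤ))) ((2 : ℝ) ^ (-(nk k : ℤ) + 1))) s
      (AS S) ≤
    ((2 ^ cnt S (nk k) : ℕ) : ℝ≥0∞) * ENNReal.ofReal (w (nk k) ^ s)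
      + ENNReal.ofReal (w (nk q) ^ s) * (1 - ENNReal.ofReal ((1/2:ℝ) ^ s))⁻¹ := by
  classical
  set n := nk k with hn
  set P := (Fn S n).powerset with hPdef
  set L := P.toList with hL
  have hlen : L.length = 2 ^ cnt S n := by
    rw [hL, Finset.length_toList, hPdef, Finset.card_powerset]; rfl
  set t : ℕ → Set ℝ := fun i =>
    if h : i < L.length then Set.Icc (val (L.get ⟨i, h⟩)) (val (L.get ⟨i, h⟩) + w n)
    else Set.Icc 0 (w (nk (q + (i - L.length)))) with ht
  have hwD : ∀ m : ℕ, w (nk m) ∈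
      ⋃ k, Set.Ico ((2 : ℝ) ^ (-(nk k : ℤ))) ((2 : ℝ) ^ (-(nk k : ℤ) + 1)) := by
    intro m
    rw [Set.mem_iUnion]
    refine ⟨m, ?_⟩
    rw [two_zpow_succ]
    have := w_pos (nk m)
    exact Set.mem_Ico.2 ⟨le_refl _, by linarith⟩
  have hdiam : ∀ i, diam (t i) =
      if i < L.length then w n else w (nk (q + (i - L.length))) := by
    intro i
    simp only [ht]
    by_cases h : i < L.length
    · rw [dif_pos h, if_pos h, Real.diam_Icc (by have := w_pos n; linarith)]
      ring
    · rw [dif_neg h, if_neg h, Real.diam_Icc (w_nonneg _)]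
      ring
  have hmem : ∀ i, diam (t i) ∈
      ⋃ k, Set.Ico ((2 : ℝ) ^ (-(nk k : ℤ))) ((2 : ℝ) ^ (-(nk k : ℤ) + 1)) := by
    intro i
    rw [hdiam i]
    by_cases h : i < L.length
    · rw [if_pos h, hn]; exact hwD k
    · rw [if_neg h]; exact hwD _
  have hcov : AS S ⊆ ⋃ i, t i := by
    intro x hx
    rw [← range_g] at hx
    obtain ⟨b, rfl⟩ := hx
    set R := (Fn S n).filter (fun i => b i = true) with hR
    have hRP : R ∈ P := Finset.mem_powerset.2 (Finset.filter_subset _ _)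
    have hRL : R ∈ L := Finset.mem_toList.2 hRP
    obtain ⟨idx, hidx⟩ := List.mem_iff_get.1 hRL
    rw [Set.mem_iUnion]
    refine ⟨idx.1, ?_⟩
    simp only [ht]
    have hidx1 : (idx.1 : ℕ) < L.length := idx.2
    rw [dif_pos hidx1]
    have : L.get ⟨idx.1, hidx1⟩ = R := by
      convert hidx using 2
    rw [this]
    have hdec := g_decomp S hS b n
    have ht1 := tail_nonneg S b (n+1)
    have ht2 := tail_le S b n
    rw [← hR] at hdec
    rw [Set.mem_Icc, hdec]
    constructor <;> linarith
  have hbound : restContent (⋃ k, Set.Ico ((2 : ℝ) ^ (-(nk k : ℤ)))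
      ((2 : ℝ) ^ (-(nk k : ℤ) + 1))) s (AS S) ≤ ∑' i, ENNReal.ofReal (diam (t i)) ^ s := by
    rw [restContent]
    exact iInf_le_of_le t (iInf_le_of_le hcov (iInf_le _ hmem))
  refine hbound.trans ?_
  -- compute/bound the sum
  set A : ℝ≥0∞ := ENNReal.ofReal (w n ^ s) with hA
  set B : ℕ → ℝ≥0∞ := fun j => ENNReal.ofReal (w (nk (q + j)) ^ s) with hB
  have hterm : ∀ i, ENNReal.ofReal (diam (t i)) ^ s =
      (if i < L.length then A else 0) + (if i < L.length then 0 else B (i - L.length)) := by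
    intro i
    rw [hdiam i]
    by_cases h : i < L.length
    · rw [if_pos h, if_pos h, if_pos h, add_zero, hA,
        ENNReal.ofReal_rpow_of_pos (w_pos n)]
    · rw [if_neg h, if_neg h, if_neg h, zero_add, hB,
        ENNReal.ofReal_rpow_of_pos (w_pos _)]
  rw [tsum_congr hterm, ENNReal.tsum_add]
  have hsum1 : ∑' i, (if i < L.length then A else 0) = ((2 ^ cnt S n : ℕ) : ℝ≥0∞) * A := by
    rw [tsum_eq_sum (s := Finset.range L.length) (fun i hi => by
      rw [if_neg (by simpa using hi)])]
    rw [Finset.sum_ite_of_true (fun i hi => Finset.mem_range.1 hi), Finset.sum_const,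
      Finset.card_range, hlen, nsmul_eq_mul]
  have hsum2 : ∑' i, (if i < L.length then (0:ℝ≥0∞) else B (i - L.length)) = ∑' j, B j := by
    have hinj : Function.Injective (fun j : ℕ => j + L.length) := add_left_injective L.length
    have hsupp : Function.support
        (fun i => if i < L.length then (0:ℝ≥0∞) else B (i - L.length)) ⊆
        Set.range (fun j : ℕ => j + L.length) := by
      intro x hx
      rw [Function.mem_support] at hx
      by_cases h : x < L.length
      · rw [if_pos h] at hx; exact absurd rfl hx
      · exact ⟨x - L.length, by dsimp only; omega⟩
    rw [← Function.Injective.tsum_eq hinj hsupp]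
    refine tsum_congr fun j => ?_
    have h1 : ¬ (j + L.length < L.length) := by omega
    rw [if_neg h1]
    congr 1
    omega
  rw [hsum1, hsum2]
  refine add_le_add le_rfl ?_
  · -- bound the geometric tail
    have hBle : ∀ j, B j ≤ ENNReal.ofReal (w (nk q) ^ s) *
        (ENNReal.ofReal ((1/2:ℝ) ^ s)) ^ j := by
      intro j
      rw [hB]
      have h1 : w (nk (q + j)) ≤ w (nk q + j) := w_antitone (nk_add_le nk hmono q j)
      have h2 : w (nk q + j) = w (nk q) * (1/2:ℝ) ^ j := by
        rw [w_eq, w_eq, pow_add]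
      have h3 : w (nk (q + j)) ^ s ≤ (w (nk q) * (1/2:ℝ) ^ j) ^ s := by
        rw [← h2]
        exact Real.rpow_le_rpow (w_nonneg _) h1 hs.le
      have h4 : (w (nk q) * (1/2:ℝ) ^ j) ^ s = w (nk q) ^ s * ((1/2:ℝ) ^ s) ^ j := by
        rw [Real.mul_rpow (w_nonneg _) (by positivity), ← Real.rpow_natCast ((1/2:ℝ)) j,
          ← Real.rpow_mul (by norm_num), mul_comm (j:ℝ) s, Real.rpow_mul (by norm_num),
          Real.rpow_natCast]
      calc ENNReal.ofReal (w (nk (q + j)) ^ s)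
          ≤ ENNReal.ofReal (w (nk q) ^ s * ((1/2:ℝ) ^ s) ^ j) := by
            apply ENNReal.ofReal_le_ofReal
            rw [← h4]; exact h3
        _ = ENNReal.ofReal (w (nk q) ^ s) * (ENNReal.ofReal ((1/2:ℝ) ^ s)) ^ j := by
            rw [ENNReal.ofReal_mul (Real.rpow_nonneg (w_nonneg _) s),
              ENNReal.ofReal_pow (Real.rpow_nonneg (by norm_num) s)]
    calc ∑' j, B j ≤ ∑' j, ENNReal.ofReal (w (nk q) ^ s) *
          (ENNReal.ofReal ((1/2:ℝ) ^ s)) ^ j := ENNReal.tsum_le_tsum hBle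
      _ = ENNReal.ofReal (w (nk q) ^ s) * (1 - ENNReal.ofReal ((1/2:ℝ) ^ s))⁻¹ := by
          rw [ENNReal.tsum_mul_left, ENNReal.tsum_geometric]

lemma w_le_half_pow (nk : ℕ → ℕ) (hmono : StrictMono nk) (q : ℕ) (s : ℝ) (hs : 0 < s) :
    w (nk q) ^ s ≤ ((1/2:ℝ) ^ s) ^ q := by
  have h1 : w (nk q) ≤ w q := w_antitone (hmono.le_apply)
  have h2 : w q = (1/2:ℝ) ^ q := w_eq q
  have h3 : w (nk q) ^ s ≤ ((1/2:ℝ) ^ q) ^ s := by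
    rw [← h2]
    exact Real.rpow_le_rpow (w_nonneg _) h1 hs.le
  refine h3.trans_eq ?_
  rw [← Real.rpow_natCast ((1/2:ℝ)) q, ← Real.rpow_mul (by norm_num), mul_comm,
    Real.rpow_mul (by norm_num), Real.rpow_natCast]

lemma content_zero (hS : 0 ∉ S) (nk : ℕ → ℕ) (hmono : StrictMono nk)
    (s s' : ℝ) (hs'0 : 0 ≤ s') (hss : s' < s)
    (hfreq : ∀ K : ℕ, ∃ k, K ≤ k ∧ (cnt S (nk k) : ℝ) ≤ s' * nk k) :
    restContent (⋃ k, Set.Ico ((2 : ℝ) ^ (-(nk k : ℤ))) ((2 : ℝ) ^ (-(nk k : ℤ) + 1))) s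
      (AS S) = 0 := by
  have hs : 0 < s := lt_of_le_of_lt hs'0 hss
  refine le_antisymm ?_ zero_le
  refine ENNReal.le_of_forall_pos_le_add fun ε hε _ => ?_
  rw [zero_add]
  set r : ℝ := (1/2:ℝ) ^ s with hr
  have hr0 : 0 < r := Real.rpow_pos_of_pos (by norm_num) s
  have hr1 : r < 1 := Real.rpow_lt_one (by norm_num) (by norm_num) hs
  set G : ℝ≥0∞ := (1 - ENNReal.ofReal r)⁻¹ with hG
  have hGne : G ≠ ⊤ := by
    rw [hG, Ne, ENNReal.inv_eq_top, tsub_eq_zero_iff_le]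
    exact fun h => absurd (lt_of_lt_of_le ((ENNReal.ofReal_lt_one).2 hr1) h) (lt_irrefl _)
  set half : ℝ≥0∞ := (ε : ℝ≥0∞) / 2 with hhalf
  have hhalfpos : 0 < half := by
    rw [hhalf]
    exact ENNReal.div_pos (by exact_mod_cast hε.ne') (by norm_num)
  -- choose q for the tail
  have htendq : Filter.Tendsto (fun q : ℕ => ENNReal.ofReal r ^ q * G) atTop (nhds 0) := by
    have h1 : Filter.Tendsto (fun q : ℕ => ENNReal.ofReal r ^ q) atTop (nhds 0) :=
      ENNReal.tendsto_pow_atTop_nhds_zero_of_lt_one ((ENNReal.ofReal_lt_one).2 hr1)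
    have := ENNReal.Tendsto.mul_const h1 (Or.inr hGne)
    simpa using this
  obtain ⟨q, hq⟩ := (htendq.eventually_lt_const hhalfpos).exists
  -- choose K then k for the main term
  set ρ : ℝ := (2:ℝ) ^ (-(s - s')) with hρ
  have hρ0 : 0 < ρ := Real.rpow_pos_of_pos two_pos _
  have hρ1 : ρ < 1 := Real.rpow_lt_one_of_one_lt_of_neg one_lt_two (by linarith)
  have htendK : Filter.Tendsto (fun K : ℕ => ENNReal.ofReal ρ ^ K) atTop (nhds 0) :=
    ENNReal.tendsto_pow_atTop_nhds_zero_of_lt_one ((ENNReal.ofReal_lt_one).2 hρ1)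
  obtain ⟨K, hK⟩ := (htendK.eventually_lt_const hhalfpos).exists
  obtain ⟨k, hkK, hcnt⟩ := hfreq K
  -- apply the cover bound
  refine le_trans (cover_bound S hS nk hmono s hs k q) ?_
  have hmain : ((2 ^ cnt S (nk k) : ℕ) : ℝ≥0∞) * ENNReal.ofReal (w (nk k) ^ s) ≤ half := by
    set n := nk k with hn
    have hreal : (2:ℝ) ^ cnt S n * w n ^ s ≤ ρ ^ n := by
      have h1 : (2:ℝ) ^ cnt S n ≤ (2:ℝ) ^ (s' * n) := by
        rw [← Real.rpow_natCast 2 (cnt S n)]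
        exact Real.rpow_le_rpow_of_exponent_le one_le_two hcnt
      have h2 : w n ^ s = (2:ℝ) ^ (-(n:ℝ) * s) := by
        rw [w_rpow, ← Real.rpow_mul (by norm_num)]
      have h3 : (2:ℝ) ^ cnt S n * w n ^ s ≤ (2:ℝ) ^ (s' * n + (-(n:ℝ) * s)) := by
        rw [Real.rpow_add two_pos, h2]
        have h4 : (0:ℝ) < w n ^ s := Real.rpow_pos_of_pos (w_pos n) s
        nlinarith [Real.rpow_pos_of_pos (two_pos (α := ℝ)) (s' * n)]
      refine h3.trans_eq ?_
      rw [hρ, ← Real.rpow_natCast ((2:ℝ) ^ (-(s - s'))) n, ← Real.rpow_mul (by norm_num)]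
      congr 1
      ring
    have hρn : ENNReal.ofReal (ρ ^ n) ≤ ENNReal.ofReal (ρ ^ K) := by
      apply ENNReal.ofReal_le_ofReal
      apply pow_le_pow_of_le_one hρ0.le hρ1.le
      exact le_trans hkK (hmono.le_apply)
    calc ((2 ^ cnt S n : ℕ) : ℝ≥0∞) * ENNReal.ofReal (w n ^ s)
        = ENNReal.ofReal ((2:ℝ) ^ cnt S n * w n ^ s) := by
          rw [ENNReal.ofReal_mul (by positivity)]
          congr 1
          rw [← ENNReal.ofReal_natCast]
          congr 1
          push_cast
          rfl
      _ ≤ ENNReal.ofReal (ρ ^ n) := ENNReal.ofReal_le_ofReal hreal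
      _ ≤ ENNReal.ofReal (ρ ^ K) := hρn
      _ = ENNReal.ofReal ρ ^ K := ENNReal.ofReal_pow hρ0.le K
      _ ≤ half := hK.le
  have htail : ENNReal.ofReal (w (nk q) ^ s) * G ≤ half := by
    have h1 : ENNReal.ofReal (w (nk q) ^ s) ≤ ENNReal.ofReal r ^ q := by
      rw [← ENNReal.ofReal_pow hr0.le]
      exact ENNReal.ofReal_le_ofReal (w_le_half_pow nk hmono q s hs)
    calc ENNReal.ofReal (w (nk q) ^ s) * G ≤ ENNReal.ofReal r ^ q * G :=
          mul_le_mul_left h1 G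
      _ ≤ half := hq.le
  calc ((2 ^ cnt S (nk k) : ℕ) : ℝ≥0∞) * ENNReal.ofReal (w (nk k) ^ s)
      + ENNReal.ofReal (w (nk q) ^ s) * G ≤ half + half := add_le_add hmain htail
    _ = ε := by rw [hhalf, ENNReal.add_halves]


lemma cnt_le_self (n : ℕ) : cnt S n ≤ n := by
  calc cnt S n ≤ (Finset.Icc 1 n).card := Finset.card_le_card (Fn_subset_Icc S n)
    _ = n := by rw [Nat.card_Icc]; omega

lemma MS_nonneg (n : ℕ) : 0 ≤ MS S n := by
  rw [MS_eq]; positivity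

lemma MS_le_one (n : ℕ) : MS S n ≤ 1 := by
  rw [MS_eq]
  rcases Nat.eq_zero_or_pos n with h | h
  · simp [h]
  · rw [div_le_one (by exact_mod_cast h)]
    exact_mod_cast cnt_le_self S n

end
end RestDimAux

open RestDimAux

/-- for `D = ∪_k [2^{-n_k}, 2^{-n_k+1})` with `(n_k)` a strictly increasing
sequence of positive integers, `dim_D A_S = liminf_{k→∞} M_S(n_k)`. -/
theorem restDim_AS (nk : ℕ → ℕ) (hmono : StrictMono nk) (hpos : ∀ k, 0 < nk k)
    (S : Set ℕ) (hS : 0 ∉ S) :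
    restDim (⋃ k, Set.Ico ((2 : ℝ) ^ (-(nk k : ℤ))) ((2 : ℝ) ^ (-(nk k : ℤ) + 1))) (AS S) =
      ENNReal.ofReal (liminf (fun k => MS S (nk k)) atTop) := by
  classical
  set d : ℝ := liminf (fun k => MS S (nk k)) atTop with hd
  have hbdd_le : Filter.IsBoundedUnder (· ≤ ·) atTop (fun k : ℕ => MS S (nk k)) :=
    Filter.isBoundedUnder_of ⟨1, fun k => MS_le_one S (nk k)⟩
  have hbdd_ge : Filter.IsBoundedUnder (· ≥ ·) atTop (fun k : ℕ => MS S (nk k)) :=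
    Filter.isBoundedUnder_of ⟨0, fun k => MS_nonneg S (nk k)⟩
  have hcobdd : Filter.IsCoboundedUnder (· ≥ ·) atTop (fun k => MS S (nk k)) :=
    hbdd_le.isCoboundedUnder_ge
  have hd0 : 0 ≤ d := by
    rw [hd]
    exact Filter.le_liminf_of_le hcobdd
      (Filter.Eventually.of_forall fun k => MS_nonneg S (nk k))
  refine le_antisymm ?_ ?_
  · -- upper bound
    refine ENNReal.le_of_forall_pos_le_add fun ε hε _ => ?_
    set σ : ℝ≥0 := d.toNNReal + ε with hσ
    have hσd : (σ : ℝ) = d + ε := by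
      rw [hσ]; push_cast; rw [Real.coe_toNNReal d hd0]
    set s' : ℝ := d + (ε : ℝ)/2 with hs'
    have hεpos : (0:ℝ) < ε := hε
    have hfreq0 : ∃ᶠ k in atTop, MS S (nk k) < s' :=
      Filter.frequently_lt_of_liminf_lt hcobdd (by rw [← hd, hs']; linarith)
    have hfreq : ∀ K : ℕ, ∃ k, K ≤ k ∧ (cnt S (nk k) : ℝ) ≤ s' * nk k := by
      intro K
      obtain ⟨k, hkK, hk⟩ := Filter.frequently_atTop.1 hfreq0 K
      refine ⟨k, hkK, ?_⟩
      rw [MS_eq] at hk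
      have hn : (0:ℝ) < nk k := by exact_mod_cast hpos k
      rw [div_lt_iff₀ hn] at hk
      linarith
    have hcz : restContent
        (⋃ k, Set.Ico ((2 : ℝ) ^ (-(nk k : ℤ))) ((2 : ℝ) ^ (-(nk k : ℤ) + 1))) (σ : ℝ)
        (AS S) = 0 := by
      refine content_zero S hS nk hmono (σ : ℝ) s' (by rw [hs']; linarith) ?_ hfreq
      rw [hσd, hs']; linarith
    calc restDim (⋃ k, Set.Ico ((2 : ℝ) ^ (-(nk k : ℤ))) ((2 : ℝ) ^ (-(nk k : ℤ) + 1)))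
          (AS S) ≤ (σ : ℝ≥0∞) := by
          rw [restDim]
          exact iInf_le_of_le σ (iInf_le _ hcz)
      _ = ENNReal.ofReal d + ε := by
          rw [hσ, ENNReal.coe_add]
          rfl
  · -- lower bound
    rw [restDim]
    refine le_iInf fun σ => le_iInf fun hσ => ?_
    by_contra hcon
    push_neg at hcon
    have hσd : (σ : ℝ) < d := by
      have h1 : (σ : ℝ≥0∞) < ENNReal.ofReal d := hcon
      rw [ENNReal.ofReal, ENNReal.coe_lt_coe] at h1
      exact Real.lt_toNNReal_iff_coe_lt.1 h1
    have hev : ∀ᶠ k in atTop, (σ : ℝ) < MS S (nk k) :=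
      Filter.eventually_lt_of_lt_liminf (by rw [← hd]; exact hσd) hbdd_ge
    obtain ⟨K0, hK0⟩ := Filter.eventually_atTop.1 hev
    have hK0' : ∀ k, K0 ≤ k → (σ : ℝ) * nk k ≤ cnt S (nk k) := by
      intro k hk
      have h1 := hK0 k hk
      rw [MS_eq] at h1
      have hn : (0:ℝ) < nk k := by exact_mod_cast hpos k
      rw [lt_div_iff₀ hn] at h1
      exact h1.le
    exact content_pos S hS nk hmono (σ : ℝ) σ.2 K0 hK0' hσ
end
end

section
/- For any S ⊆ ℕ and positive integers p < q, the map f : A_{φ(S)} → A_S defined by f(Σ_i x_i 2^{-φ(i)}) = Σ_i x_i 2^{-i} is well-defined, surjective, and (p/q)-Hölder, where φ = φ_{p,q} is the map sending kp − m to kq − m for all k ∈ ℕ and 0 ≤ m ≤ p−1. -/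
set_option maxHeartbeats 1000000

/-- `φ_{p,q}` sends `kp - m` to `kq - m` (for `k ≥ 1`, `0 ≤ m ≤ p-1`); explicitly
`φ_{p,q}(i) = i + (q-p)·⌈i/p⌉`. -/
def phipq (p q i : ℕ) : ℕ := i + (q - p) * ((i + p - 1) / p)


noncomputable def B (p q : ℕ) : ℝ := (1 - (2⁻¹:ℝ)^p) * (1 - (2⁻¹:ℝ)^q)⁻¹

lemma half_pow_lt_one {n : ℕ} (hn : 0 < n) : (2⁻¹:ℝ)^n < 1 :=
  pow_lt_one₀ (by norm_num) (by norm_num) hn.ne'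

lemma B_nonneg (p q : ℕ) : 0 ≤ B p q := by
  unfold B
  have h1 : (2⁻¹:ℝ)^p ≤ 1 := pow_le_one₀ (by norm_num) (by norm_num)
  have h2 : (2⁻¹:ℝ)^q ≤ 1 := pow_le_one₀ (by norm_num) (by norm_num)
  have := inv_nonneg.2 (sub_nonneg.2 h2)
  nlinarith [sub_nonneg.2 h1]

lemma B_lt_one {p q : ℕ} (hp : 0 < p) (hpq : p < q) : B p q < 1 := by
  unfold B
  have hq : 0 < q := hp.trans hpq
  have h2 : (2⁻¹:ℝ)^q < 1 := half_pow_lt_one hq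
  have h3 : (2⁻¹:ℝ)^q < (2⁻¹:ℝ)^p := by
    apply pow_lt_pow_right_of_lt_one₀ (by norm_num) (by norm_num) hpq
  rw [← div_eq_mul_inv, div_lt_one (by linarith)]
  linarith

lemma fin_geom (p : ℕ) : ∑ s : Fin p, (2⁻¹:ℝ)^((s:ℕ)+1) = 1 - (2⁻¹:ℝ)^p := by
  induction p with
  | zero => simp
  | succ m ih =>
    rw [Fin.sum_univ_castSucc]
    simp only [Fin.coe_castSucc, Fin.val_last]
    rw [ih, pow_succ]
    ring

lemma tsum_geom_exact {p q : ℕ} (hp : 0 < p) (hpq : p < q) :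
    ∑' k : ℕ, (2⁻¹:ℝ)^(k + 1 + (q-p)*(k/p)) = B p q := by
  haveI : NeZero p := ⟨hp.ne'⟩
  have hq : 0 < q := hp.trans hpq
  set t : ℕ → ℝ := fun k => (2⁻¹:ℝ)^(k + 1 + (q-p)*(k/p)) with ht
  have hterm : ∀ ms : ℕ × Fin p, t ((Nat.divModEquiv p).symm ms)
      = ((2⁻¹:ℝ)^q)^ms.1 * (2⁻¹:ℝ)^((ms.2:ℕ)+1) := by
    rintro ⟨m, s⟩
    have hs : (s:ℕ) < p := s.is_lt
    have hdiv : (m * p + (s:ℕ)) / p = m := by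
      rw [Nat.mul_comm m p, Nat.mul_add_div hp, Nat.div_eq_of_lt hs]; omega
    have hexp : m * p + (s:ℕ) + 1 + (q-p)*((m * p + (s:ℕ))/p) = m*q + ((s:ℕ)+1) := by
      rw [hdiv]
      have : (q-p)*m + m*p = m*q := by
        have : p + (q - p) = q := by omega
        calc (q-p)*m + m*p = m * (p + (q-p)) := by ring
          _ = m * q := by rw [this]
      omega
    show (2⁻¹:ℝ)^(m * p + (s:ℕ) + 1 + (q-p)*((m * p + (s:ℕ))/p)) = _
    rw [hexp, pow_add, pow_mul']
  have hFsum : Summable (fun m : ℕ => ((2⁻¹:ℝ)^q)^m) :=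
    summable_geometric_of_lt_one (by positivity) (half_pow_lt_one hq)
  have hGsum : Summable (fun s : Fin p => (2⁻¹:ℝ)^((s:ℕ)+1)) := by
    exact Summable.of_finite
  have hprod : Summable (fun ms : ℕ × Fin p => ((2⁻¹:ℝ)^q)^ms.1 * (2⁻¹:ℝ)^((ms.2:ℕ)+1)) :=
    Summable.mul_of_nonneg hFsum hGsum (fun m => by positivity) (fun s => by positivity)
  calc ∑' k, t k = ∑' ms : ℕ × Fin p, t ((Nat.divModEquiv p).symm ms) :=
        ((Nat.divModEquiv p).symm.tsum_eq t).symm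
    _ = ∑' ms : ℕ × Fin p, ((2⁻¹:ℝ)^q)^ms.1 * (2⁻¹:ℝ)^((ms.2:ℕ)+1) := by
        exact tsum_congr hterm
    _ = ∑' m : ℕ, ∑' s : Fin p, ((2⁻¹:ℝ)^q)^m * (2⁻¹:ℝ)^((s:ℕ)+1) := hprod.tsum_prod
    _ = ∑' m : ℕ, ((2⁻¹:ℝ)^q)^m * (1 - (2⁻¹:ℝ)^p) := by
        apply tsum_congr; intro m
        rw [tsum_mul_left, tsum_fintype, fin_geom]
    _ = (∑' m : ℕ, ((2⁻¹:ℝ)^q)^m) * (1 - (2⁻¹:ℝ)^p) := tsum_mul_right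
    _ = B p q := by
        rw [tsum_geometric_of_lt_one (by positivity) (half_pow_lt_one hq)]
        unfold B; ring


noncomputable def w (i : ℕ) : ℝ := (2:ℝ) ^ (-(i:ℤ))

lemma w_eq (i : ℕ) : w i = (2⁻¹:ℝ)^i := by
  simp [w, zpow_neg, ← inv_zpow]

lemma w_pos (i : ℕ) : 0 < w i := by rw [w_eq]; positivity

lemma w_add (i j : ℕ) : w (i+j) = w i * w j := by
  rw [w_eq, w_eq, w_eq, pow_add]

lemma w_anti {i j : ℕ} (h : i ≤ j) : w j ≤ w i := by
  rw [w_eq, w_eq]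
  exact pow_le_pow_of_le_one (by norm_num) (by norm_num) h

lemma w_funext : w = fun i => (2⁻¹:ℝ)^i := funext w_eq

lemma summable_w : Summable w := by
  rw [w_funext]
  exact summable_geometric_of_lt_one (by norm_num) (by norm_num)

lemma summable_bdd {g : ℕ → ℝ} (hg : ∀ i, |g i| ≤ 1) {m : ℕ → ℕ} (hm : ∀ i, i ≤ m i) :
    Summable (fun i => g i * w (m i)) := by
  apply Summable.of_norm_bounded summable_w
  intro i
  rw [Real.norm_eq_abs, abs_mul, abs_of_pos (w_pos _)]
  calc |g i| * w (m i) ≤ 1 * w i := by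
        exact mul_le_mul (hg i) (w_anti (hm i)) (w_pos _).le zero_le_one
    _ = w i := one_mul _


lemma phipq_ge (p q i : ℕ) : i ≤ phipq p q i := Nat.le_add_right _ _

lemma phipq_add_le (p q : ℕ) (hp : 0 < p) (n k : ℕ) :
    phipq p q n + k + (q - p) * (k / p) ≤ phipq p q (n + k) := by
  unfold phipq
  have h1 : (n + p - 1) / p + k / p ≤ (n + k + p - 1) / p := by
    have : (n + p - 1) + p * (k / p) ≤ n + k + p - 1 := by
      have := Nat.mul_div_le k p
      omega
    calc (n + p - 1) / p + k / p = ((n + p - 1) + p * (k / p)) / p := by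
          rw [Nat.add_mul_div_left _ _ hp]
      _ ≤ (n + k + p - 1) / p := Nat.div_le_div_right this
  have := Nat.mul_le_mul_left (q - p) h1
  rw [Nat.mul_add] at this
  omega

lemma phipq_mul_le (p q : ℕ) (hp : 0 < p) (hpq : p ≤ q) (n : ℕ) :
    phipq p q n * p ≤ n * q + (q - p) * (p - 1) := by
  unfold phipq
  have h1 : ((n + p - 1) / p) * p ≤ n + p - 1 := Nat.div_mul_le_self _ _
  have h2 : (q - p) * (((n + p - 1) / p) * p) ≤ (q - p) * (n + p - 1) :=
    Nat.mul_le_mul_left _ h1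
  have h3 : (n + (q - p) * ((n + p - 1) / p)) * p
      = n * p + (q - p) * (((n + p - 1) / p) * p) := by ring
  rw [h3]
  have h4 : (q - p) * (n + p - 1) = (q - p) * n + (q - p) * (p - 1) := by
    have : n + p - 1 = n + (p - 1) := by omega
    rw [this, Nat.mul_add]
  have h5 : n * p + (q - p) * n = n * q := by
    have : p + (q - p) = q := by omega
    calc n * p + (q - p) * n = n * (p + (q - p)) := by ring
      _ = n * q := by rw [this]
  omega

lemma phipq_strictMono (p q : ℕ) (hp : 0 < p) : StrictMono (phipq p q) := by
  intro i j hij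
  have h := phipq_add_le p q hp i (j - i)
  have : i + (j - i) = j := by omega
  rw [this] at h
  have h2 : 0 < j - i := by omega
  omega

lemma tail_le {p q : ℕ} (hp : 0 < p) (hpq : p < q) {g : ℕ → ℝ} (hg : ∀ i, |g i| ≤ 1) (n : ℕ) :
    |∑' k, g (k+(n+1)) * w (phipq p q (k+(n+1)))| ≤ w (phipq p q n) * B p q := by
  have hfull : Summable (fun i => g i * w (phipq p q i)) :=
    summable_bdd hg (fun i => phipq_ge p q i)
  have hs : Summable (fun k => g (k+(n+1)) * w (phipq p q (k+(n+1)))) :=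
    (summable_nat_add_iff (n+1)).2 hfull
  have hbound : ∀ k, |g (k+(n+1)) * w (phipq p q (k+(n+1)))|
      ≤ w (phipq p q n) * (2⁻¹:ℝ)^(k + 1 + (q-p)*(k/p)) := by
    intro k
    have h1 : phipq p q n + (k+1) + (q-p)*(k/p) ≤ phipq p q (n+(k+1)) := by
      have := phipq_add_le p q hp n (k+1)
      have hdd : (q-p) * (k/p) ≤ (q-p) * ((k+1)/p) :=
        Nat.mul_le_mul_left _ (Nat.div_le_div_right (Nat.le_succ k))
      omega
    have h2 : w (phipq p q (k+(n+1))) ≤ w (phipq p q n) * (2⁻¹:ℝ)^(k + 1 + (q-p)*(k/p)) := by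
      have he : k+(n+1) = n+(k+1) := by omega
      rw [he]
      calc w (phipq p q (n+(k+1))) ≤ w (phipq p q n + ((k + 1 + (q-p)*(k/p)))) := by
            apply w_anti; omega
        _ = w (phipq p q n) * w (k + 1 + (q-p)*(k/p)) := w_add _ _
        _ = w (phipq p q n) * (2⁻¹:ℝ)^(k + 1 + (q-p)*(k/p)) := by rw [w_eq (k + 1 + (q-p)*(k/p))]
    calc |g (k+(n+1)) * w (phipq p q (k+(n+1)))|
        = |g (k+(n+1))| * w (phipq p q (k+(n+1))) := by
          rw [abs_mul, abs_of_pos (w_pos _)]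
      _ ≤ 1 * w (phipq p q (k+(n+1))) :=
          mul_le_mul_of_nonneg_right (hg _) (w_pos _).le
      _ = w (phipq p q (k+(n+1))) := one_mul _
      _ ≤ w (phipq p q n) * (2⁻¹:ℝ)^(k + 1 + (q-p)*(k/p)) := h2
  have hgeo : Summable (fun k : ℕ => w (phipq p q n) * (2⁻¹:ℝ)^(k + 1 + (q-p)*(k/p))) := by
    apply Summable.mul_left
    apply Summable.of_nonneg_of_le (fun k => by positivity)
      (fun k => pow_le_pow_of_le_one (by norm_num) (by norm_num) (by omega))
      (summable_geometric_of_lt_one (by norm_num) (by norm_num : (2⁻¹:ℝ) < 1))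
  calc |∑' k, g (k+(n+1)) * w (phipq p q (k+(n+1)))|
      ≤ ∑' k, |g (k+(n+1)) * w (phipq p q (k+(n+1)))| := by
        have h := norm_tsum_le_tsum_norm (f := fun k => g (k+(n+1)) * w (phipq p q (k+(n+1))))
          (by simp only [Real.norm_eq_abs]; exact hs.abs)
        simp only [Real.norm_eq_abs] at h
        exact h
    _ ≤ ∑' k, w (phipq p q n) * (2⁻¹:ℝ)^(k + 1 + (q-p)*(k/p)) :=
        Summable.tsum_le_tsum hbound hs.abs hgeo
    _ = w (phipq p q n) * B p q := by rw [tsum_mul_left, tsum_geom_exact hp hpq]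

lemma lower_bound {p q : ℕ} (hp : 0 < p) (hpq : p < q) {g : ℕ → ℝ} (hg : ∀ i, |g i| ≤ 1)
    (n : ℕ) (h0 : ∀ j, j < n → g j = 0) (hn : g n = 1) :
    w (phipq p q n) * (1 - B p q) ≤ ∑' j, g j * w (phipq p q j) := by
  have hfull : Summable (fun i => g i * w (phipq p q i)) :=
    summable_bdd hg (fun i => phipq_ge p q i)
  have hsplit := Summable.sum_add_tsum_nat_add (n+1) hfull
  have hfin : ∑ j ∈ Finset.range (n+1), g j * w (phipq p q j) = w (phipq p q n) := by
    rw [Finset.sum_range_succ]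
    have : ∑ j ∈ Finset.range n, g j * w (phipq p q j) = 0 := by
      apply Finset.sum_eq_zero
      intro j hj
      rw [h0 j (Finset.mem_range.1 hj), zero_mul]
    rw [this, zero_add, hn, one_mul]
  have htail := tail_le hp hpq hg n
  have h1 : -(w (phipq p q n) * B p q) ≤ ∑' k, g (k+(n+1)) * w (phipq p q (k+(n+1))) :=
    neg_le_of_abs_le htail
  calc w (phipq p q n) * (1 - B p q)
      = w (phipq p q n) + -(w (phipq p q n) * B p q) := by ring
    _ ≤ w (phipq p q n) + ∑' k, g (k+(n+1)) * w (phipq p q (k+(n+1))) := by linarith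
    _ = ∑' j, g j * w (phipq p q j) := by rw [← hfin, hsplit]

lemma upper_bound {g : ℕ → ℝ} (hg : ∀ i, |g i| ≤ 1) (n : ℕ) (h0 : ∀ j, j < n → g j = 0) :
    |∑' j, g j * w j| ≤ 2 * w n := by
  have hfull : Summable (fun i => g i * w i) := summable_bdd hg (fun i => le_refl i)
  have hs : Summable (fun k => g (k+n) * w (k+n)) := (summable_nat_add_iff n).2 hfull
  have hsplit := Summable.sum_add_tsum_nat_add n hfull
  have hfin : ∑ j ∈ Finset.range n, g j * w j = 0 := by
    apply Finset.sum_eq_zero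
    intro j hj
    rw [h0 j (Finset.mem_range.1 hj), zero_mul]
  have hgeo : Summable (fun k : ℕ => w n * (2⁻¹:ℝ)^k) :=
    Summable.mul_left _ (summable_geometric_of_lt_one (by norm_num) (by norm_num))
  calc |∑' j, g j * w j| = |∑' k, g (k+n) * w (k+n)| := by rw [← hsplit, hfin, zero_add]
    _ ≤ ∑' k, |g (k+n) * w (k+n)| := by
        have h := norm_tsum_le_tsum_norm (f := fun k => g (k+n) * w (k+n))
          (by simp only [Real.norm_eq_abs]; exact hs.abs)
        simp only [Real.norm_eq_abs] at h
        exact h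
    _ ≤ ∑' k, w n * (2⁻¹:ℝ)^k := by
        apply Summable.tsum_le_tsum _ hs.abs hgeo
        intro k
        rw [abs_mul, abs_of_pos (w_pos _)]
        calc |g (k+n)| * w (k+n) ≤ 1 * w (k+n) :=
              mul_le_mul_of_nonneg_right (hg _) (w_pos _).le
          _ = w (n+k) := by rw [one_mul, add_comm]
          _ = w n * (2⁻¹:ℝ)^k := by rw [w_add, w_eq k]
    _ = w n * 2 := by
        rw [tsum_mul_left, tsum_geometric_of_lt_one (by norm_num) (by norm_num)]
        norm_num
    _ = 2 * w n := mul_comm _ _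

noncomputable def C (p q : ℕ) : ℝ := 2 * 2^p / ((1 - B p q) ^ ((p:ℝ)/q))

lemma C_pos {p q : ℕ} (hp : 0 < p) (hpq : p < q) : 0 < C p q := by
  unfold C
  apply div_pos (by positivity)
  exact Real.rpow_pos_of_pos (by linarith [B_lt_one hp hpq]) _

lemma key_aux {p q : ℕ} (hp : 0 < p) (hpq : p < q) {g : ℕ → ℝ} (hg : ∀ i, |g i| ≤ 1)
    {n : ℕ} (h0 : ∀ j, j < n → g j = 0) (hn : g n = 1) :
    |∑' j, g j * w j| ≤ C p q * |∑' j, g j * w (phipq p q j)| ^ ((p:ℝ)/q) := by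
  have hq : 0 < q := hp.trans hpq
  set ε : ℝ := 1 - B p q with hε
  have hεpos : 0 < ε := by have := B_lt_one hp hpq; simp [hε]; linarith
  set r : ℝ := (p:ℝ)/q with hr
  have hr0 : 0 < r := by
    have hp' : (0:ℝ) < p := by exact_mod_cast hp
    have hq' : (0:ℝ) < q := by exact_mod_cast hq
    rw [hr]; positivity
  set D : ℝ := ∑' j, g j * w (phipq p q j) with hD
  have hDlow : w (phipq p q n) * ε ≤ D := lower_bound hp hpq hg n h0 hn
  have hDpos : 0 < D := lt_of_lt_of_le (mul_pos (w_pos _) hεpos) hDlow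
  have habsD : |D| = D := abs_of_pos hDpos
  -- rpow monotonicity
  have h1 : (w (phipq p q n) * ε) ^ r ≤ D ^ r :=
    Real.rpow_le_rpow (mul_pos (w_pos _) hεpos).le hDlow hr0.le
  have h2 : (w (phipq p q n) * ε) ^ r = (w (phipq p q n)) ^ r * ε ^ r :=
    Real.mul_rpow (w_pos _).le hεpos.le
  have hεr : (0:ℝ) < ε ^ r := Real.rpow_pos_of_pos hεpos r
  -- bound on (w φ n) ^ r
  have hexp : ((phipq p q n : ℝ)) * r ≤ (n:ℝ) + p := by
    have hnat : phipq p q n * p ≤ (n + p) * q := by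
      have := phipq_mul_le p q hp hpq.le n
      have h4 : (q - p) * (p - 1) ≤ p * q := by
        calc (q-p)*(p-1) ≤ q * p := Nat.mul_le_mul (by omega) (by omega)
          _ = p * q := Nat.mul_comm _ _
      calc phipq p q n * p ≤ n * q + (q-p)*(p-1) := this
        _ ≤ n * q + p * q := by omega
        _ = (n + p) * q := by ring
    have hcast : ((phipq p q n : ℝ)) * p ≤ ((n:ℝ) + p) * q := by
      have := (Nat.cast_le (α := ℝ)).2 hnat
      push_cast at this
      linarith
    have hq' : (0:ℝ) < (q:ℝ) := by exact_mod_cast hq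
    rw [hr, mul_div_assoc']
    rw [div_le_iff₀ hq']
    linarith
  have h3 : (2⁻¹:ℝ) ^ ((n:ℝ) + (p:ℝ)) ≤ (w (phipq p q n)) ^ r := by
    rw [w_eq, ← Real.rpow_natCast (2⁻¹:ℝ) (phipq p q n),
      ← Real.rpow_mul (by norm_num : (0:ℝ) ≤ 2⁻¹)]
    exact Real.rpow_le_rpow_of_exponent_ge (by norm_num) (by norm_num) hexp
  have hpow : (2:ℝ)^p * (2⁻¹:ℝ)^p = 1 := by rw [← mul_pow]; norm_num
  have h5 : 2 * w n = 2 * 2^p * ((2⁻¹:ℝ) ^ ((n:ℝ) + (p:ℝ))) := by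
    rw [Real.rpow_add (by norm_num : (0:ℝ) < 2⁻¹), Real.rpow_natCast, Real.rpow_natCast, w_eq]
    calc 2 * (2⁻¹:ℝ)^n = 2 * ((2:ℝ)^p * (2⁻¹:ℝ)^p) * (2⁻¹:ℝ)^n := by rw [hpow]; ring
      _ = 2 * 2^p * ((2⁻¹:ℝ)^n * (2⁻¹:ℝ)^p) := by ring
  calc |∑' j, g j * w j| ≤ 2 * w n := upper_bound hg n h0
    _ = 2 * 2^p * ((2⁻¹:ℝ) ^ ((n:ℝ) + (p:ℝ))) := h5
    _ ≤ 2 * 2^p * ((w (phipq p q n)) ^ r) := by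
        apply mul_le_mul_of_nonneg_left h3 (by positivity)
    _ = C p q * ((w (phipq p q n)) ^ r * ε ^ r) := by
        unfold C
        rw [← hε, ← hr, div_mul_eq_mul_div, eq_div_iff hεr.ne']
        ring
    _ = C p q * (w (phipq p q n) * ε) ^ r := by rw [h2]
    _ ≤ C p q * D ^ r := mul_le_mul_of_nonneg_left h1 (C_pos hp hpq).le
    _ = C p q * |D| ^ r := by rw [habsD]

lemma key {p q : ℕ} (hp : 0 < p) (hpq : p < q) {g : ℕ → ℝ}
    (hval : ∀ j, g j = 0 ∨ g j = 1 ∨ g j = -1) :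
    |∑' j, g j * w j| ≤ C p q * |∑' j, g j * w (phipq p q j)| ^ ((p:ℝ)/q) := by
  classical
  have hq : 0 < q := hp.trans hpq
  have hg : ∀ i, |g i| ≤ 1 := by
    intro i; rcases hval i with h | h | h <;> rw [h] <;> norm_num
  by_cases hz : ∀ j, g j = 0
  · have e1 : ∑' j, g j * w j = 0 := by
      calc ∑' j, g j * w j = ∑' _ : ℕ, (0:ℝ) :=
            tsum_congr (fun j => by rw [hz j, zero_mul])
        _ = 0 := tsum_zero
    have e2 : ∑' j, g j * w (phipq p q j) = 0 := by
      calc ∑' j, g j * w (phipq p q j) = ∑' _ : ℕ, (0:ℝ) :=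
            tsum_congr (fun j => by rw [hz j, zero_mul])
        _ = 0 := tsum_zero
    have hne : ((p:ℝ)/q) ≠ 0 := by
      have hp' : (0:ℝ) < p := by exact_mod_cast hp
      have hq' : (0:ℝ) < q := by exact_mod_cast hq
      positivity
    rw [e1, e2, abs_zero, Real.zero_rpow hne]
    norm_num
  · push_neg at hz
    set n := Nat.find hz with hn
    have hgn : g n ≠ 0 := Nat.find_spec hz
    have h0 : ∀ j, j < n → g j = 0 := fun j hj => by
      by_contra h
      exact absurd (Nat.find_min hz hj) (by simp [h])
    rcases hval n with h | h | h
    · exact absurd h hgn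
    · exact key_aux hp hpq hg h0 h
    · have hg' : ∀ i, |(-g) i| ≤ 1 := fun i => by rw [Pi.neg_apply, abs_neg]; exact hg i
      have h0' : ∀ j, j < n → (-g) j = 0 := fun j hj => by
        rw [Pi.neg_apply, h0 j hj, neg_zero]
      have hn' : (-g) n = 1 := by rw [Pi.neg_apply, h]; norm_num
      have e1 : ∑' j, (-g) j * w j = -∑' j, g j * w j := by
        rw [← tsum_neg]
        exact tsum_congr (fun j => by rw [Pi.neg_apply]; ring)
      have e2 : ∑' j, (-g) j * w (phipq p q j) = -∑' j, g j * w (phipq p q j) := by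
        rw [← tsum_neg]
        exact tsum_congr (fun j => by rw [Pi.neg_apply]; ring)
      have := key_aux hp hpq hg' h0' hn'
      rw [e1, e2, abs_neg, abs_neg] at this
      exact this

lemma w_def (i : ℕ) : w i = (2:ℝ) ^ (-(i:ℤ)) := rfl

lemma ind_digits (S : Set ℕ) {b : ℕ → ℝ} (hb : ∀ i, b i = 0 ∨ b i = 1) (i : ℕ) :
    Set.indicator S b i = 0 ∨ Set.indicator S b i = 1 := by
  by_cases h : i ∈ S
  · rw [Set.indicator_of_mem h]; exact hb i
  · left; exact Set.indicator_of_notMem h b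

lemma X_reindex {p q : ℕ} (hp : 0 < p) (S : Set ℕ) (a : ℕ → ℝ) :
    ∑' i, Set.indicator (phipq p q '' S) a i * w i
      = ∑' j, Set.indicator S (fun j => a (phipq p q j)) j * w (phipq p q j) := by
  have hinj : Function.Injective (phipq p q) := (phipq_strictMono p q hp).injective
  have hsupp : Function.support (fun i => Set.indicator (phipq p q '' S) a i * w i)
      ⊆ Set.range (phipq p q) := by
    intro i hi
    by_contra hir
    have hnot : i ∉ phipq p q '' S := by
      intro hmem
      exact hir (Set.image_subset_range _ _ hmem)
    apply hi
    show Set.indicator (phipq p q '' S) a i * w i = 0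
    rw [Set.indicator_of_notMem hnot, zero_mul]
  calc ∑' i, Set.indicator (phipq p q '' S) a i * w i
      = ∑' j, Set.indicator (phipq p q '' S) a (phipq p q j) * w (phipq p q j) :=
        (hinj.tsum_eq hsupp).symm
    _ = ∑' j, Set.indicator S (fun j => a (phipq p q j)) j * w (phipq p q j) := by
        apply tsum_congr; intro j
        congr 1
        by_cases h : j ∈ S
        · rw [Set.indicator_of_mem h, Set.indicator_of_mem (Set.mem_image_of_mem _ h)]
        · rw [Set.indicator_of_notMem h, Set.indicator_of_notMem]
          rintro ⟨j', hj', he⟩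
          exact h (hinj he ▸ hj')

lemma main_est {p q : ℕ} (hp : 0 < p) (hpq : p < q) (S : Set ℕ) {b b' : ℕ → ℝ}
    (hb : ∀ i, b i = 0 ∨ b i = 1) (hb' : ∀ i, b' i = 0 ∨ b' i = 1) :
    |(∑' j, Set.indicator S b j * w j) - ∑' j, Set.indicator S b' j * w j|
      ≤ C p q * |(∑' j, Set.indicator S b j * w (phipq p q j))
          - ∑' j, Set.indicator S b' j * w (phipq p q j)| ^ ((p:ℝ)/q) := by
  set g : ℕ → ℝ := fun j => Set.indicator S b j - Set.indicator S b' j with hg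
  have hval : ∀ j, g j = 0 ∨ g j = 1 ∨ g j = -1 := by
    intro j
    rcases ind_digits S hb j with h1 | h1 <;> rcases ind_digits S hb' j with h2 | h2 <;>
      simp [hg, h1, h2]
  have habs : ∀ (c : ℕ → ℝ), (∀ i, c i = 0 ∨ c i = 1) → ∀ i, |Set.indicator S c i| ≤ 1 := by
    intro c hc i
    rcases ind_digits S hc i with h | h <;> rw [h] <;> norm_num
  have e1 : (∑' j, Set.indicator S b j * w j) - ∑' j, Set.indicator S b' j * w j
      = ∑' j, g j * w j := by
    rw [← Summable.tsum_sub (summable_bdd (m := fun i => i) (habs b hb) (fun i => le_refl i))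
      (summable_bdd (m := fun i => i) (habs b' hb') (fun i => le_refl i))]
    exact tsum_congr (fun j => by rw [hg]; ring)
  have e2 : (∑' j, Set.indicator S b j * w (phipq p q j))
        - ∑' j, Set.indicator S b' j * w (phipq p q j)
      = ∑' j, g j * w (phipq p q j) := by
    rw [← Summable.tsum_sub (summable_bdd (m := phipq p q) (habs b hb) (fun i => phipq_ge p q i))
      (summable_bdd (m := phipq p q) (habs b' hb') (fun i => phipq_ge p q i))]
    exact tsum_congr (fun j => by rw [hg]; ring)
  rw [e1, e2]
  exact key hp hpq hval

lemma main_eq {p q : ℕ} (hp : 0 < p) (hpq : p < q) (S : Set ℕ) {b b' : ℕ → ℝ}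
    (hb : ∀ i, b i = 0 ∨ b i = 1) (hb' : ∀ i, b' i = 0 ∨ b' i = 1)
    (h : (∑' j, Set.indicator S b j * w (phipq p q j))
        = ∑' j, Set.indicator S b' j * w (phipq p q j)) :
    (∑' j, Set.indicator S b j * w j) = ∑' j, Set.indicator S b' j * w j := by
  have hne : ((p:ℝ)/(q:ℝ)) ≠ 0 := by
    have hp' : (0:ℝ) < p := by exact_mod_cast hp
    have hq' : (0:ℝ) < q := by exact_mod_cast hp.trans hpq
    positivity
  have := main_est hp hpq S hb hb'
  rw [h, sub_self, abs_zero, Real.zero_rpow hne, mul_zero] at this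
  have h0 := abs_nonneg ((∑' j, Set.indicator S b j * w j) - ∑' j, Set.indicator S b' j * w j)
  have : |(∑' j, Set.indicator S b j * w j) - ∑' j, Set.indicator S b' j * w j| = 0 :=
    le_antisymm this h0
  rw [abs_eq_zero, sub_eq_zero] at this
  exact this


/-- the map `f : A_{φ(S)} → A_S`, `f(Σ_i x_i 2^{-φ(i)}) = Σ_i x_i 2^{-i}`,
is well-defined, surjective and `(p/q)`-Hölder, where `φ = φ_{p,q}`. -/
theorem exists_holder_surjection (p q : ℕ) (hp : 0 < p) (hpq : p < q)
    (S : Set ℕ) (hS : 0 ∉ S) :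
    ∃ f : AS (phipq p q '' S) → AS S,
      Function.Surjective f ∧
      (∃ C : ℝ, ∀ x z : AS (phipq p q '' S),
        |(f x).1 - (f z).1| ≤ C * |x.1 - z.1| ^ ((p : ℝ) / (q : ℝ))) ∧
      ∀ a : ℕ → ℝ, (∀ i, a i = 0 ∨ a i = 1) →
        ∃ hx : (∑' i : ℕ, Set.indicator S a i * (2 : ℝ) ^ (-(phipq p q i : ℤ)))
            ∈ AS (phipq p q '' S),
          (f ⟨_, hx⟩).1 = ∑' i : ℕ, Set.indicator S a i * (2 : ℝ) ^ (-(i : ℤ)) := by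
  classical
  have hinj : Function.Injective (phipq p q) := (phipq_strictMono p q hp).injective
  -- digit representation of a point of `AS (phipq p q '' S)`
  have hxval : ∀ x : AS (phipq p q '' S),
      x.1 = ∑' j, Set.indicator S (fun j => x.2.choose (phipq p q j)) j * w (phipq p q j) := by
    intro x
    calc x.1 = ∑' i, Set.indicator (phipq p q '' S) x.2.choose i * w i := x.2.choose_spec.2
      _ = _ := X_reindex hp S x.2.choose
  let F : AS (phipq p q '' S) → AS S := fun x =>
    ⟨∑' j, Set.indicator S (fun j => x.2.choose (phipq p q j)) j * w j,
     ⟨fun j => x.2.choose (phipq p q j), fun i => x.2.choose_spec.1 (phipq p q i), rfl⟩⟩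
  have hprop : ∀ a : ℕ → ℝ, (∀ i, a i = 0 ∨ a i = 1) →
      ∃ hx : (∑' i : ℕ, Set.indicator S a i * (2:ℝ)^(-(phipq p q i : ℤ)))
          ∈ AS (phipq p q '' S),
        (F ⟨_, hx⟩).1 = ∑' i : ℕ, Set.indicator S a i * (2:ℝ)^(-(i:ℤ)) := by
    intro a ha
    have ha' : ∀ i, Function.extend (phipq p q) a 0 i = 0 ∨
        Function.extend (phipq p q) a 0 i = 1 := by
      intro i
      rw [Function.extend_def]
      split
      · exact ha _
      · left; rfl
    have hcomp : (fun j => Function.extend (phipq p q) a 0 (phipq p q j)) = a :=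
      funext fun j => hinj.extend_apply a 0 j
    have hXa : ∑' i, Set.indicator (phipq p q '' S) (Function.extend (phipq p q) a 0) i * w i
        = ∑' j, Set.indicator S a j * w (phipq p q j) := by
      rw [X_reindex hp S (Function.extend (phipq p q) a 0), hcomp]
    have hx : (∑' i : ℕ, Set.indicator S a i * (2:ℝ)^(-(phipq p q i : ℤ)))
        ∈ AS (phipq p q '' S) := ⟨Function.extend (phipq p q) a 0, ha', hXa.symm⟩
    refine ⟨hx, ?_⟩
    show (∑' j, Set.indicator S (fun j => hx.choose (phipq p q j)) j * w j)
      = ∑' i : ℕ, Set.indicator S a i * (2:ℝ)^(-(i:ℤ))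
    apply main_eq hp hpq S (fun i => hx.choose_spec.1 (phipq p q i)) ha
    rw [← X_reindex hp S hx.choose]
    exact hx.choose_spec.2.symm
  refine ⟨F, ?_, ⟨C p q, ?_⟩, hprop⟩
  · -- surjectivity
    intro y
    obtain ⟨a, ha, hy⟩ := y.2
    obtain ⟨hx, hfx⟩ := hprop a ha
    exact ⟨⟨_, hx⟩, Subtype.ext (hfx.trans hy.symm)⟩
  · -- Hölder estimate
    intro x z
    have h := main_est hp hpq S (fun i => x.2.choose_spec.1 (phipq p q i))
      (fun i => z.2.choose_spec.1 (phipq p q i))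
    rw [← hxval x, ← hxval z] at h
    exact h
end

section
/- In ℝ, a Cantor set of positive Lebesgue measure is not bilipschitz equivalent to any ultrametric space. -/
open MeasureTheory Metric Filter Set
open scoped ENNReal

/-- Key step: near a point `x ∈ K`, at every small scale there is a definite measure gap. -/
theorem key_gap (K : Set ℝ) (hK : IsCompact K)
    (X : Type) [MetricSpace X] [IsUltrametricDist X]
    (f : K → X) (C C' : NNReal) (hf : LipschitzWith C f)
    (hf' : ∀ a b : K, dist a b ≤ (C' : ℝ) * dist (f a) (f b))
    (x : ℝ) (hx : x ∈ K) (ε : ℝ) (hε : 0 < ε) :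
    ∃ ρ : ℝ, 0 < ρ ∧ ρ ≤ ((C : ℝ) * C' + 1) * ε ∧
      volume (K ∩ closedBall x ρ) / volume (closedBall x ρ) ≤
        ENNReal.ofReal (1 - 1 / (2 * ((C : ℝ) * C' + 1))) := by
  classical
  set x₀ : K := ⟨x, hx⟩
  set B : Set ℝ := Subtype.val '' (f ⁻¹' closedBall (f x₀) ((C : ℝ) * ε)) with hB
  have hxB : x ∈ B := ⟨x₀, by simp only [mem_preimage, mem_closedBall, dist_self]; positivity, rfl⟩
  have hBK : B ⊆ K := by rintro z ⟨w, _, rfl⟩; exact w.2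
  have hBc : IsCompact B := by
    have : IsCompact (f ⁻¹' closedBall (f x₀) ((C : ℝ) * ε)) := by
      have := isCompact_iff_compactSpace.mp hK
      exact (isClosed_closedBall.preimage hf.continuous).isCompact
    exact this.image continuous_subtype_val
  have hBne : B.Nonempty := ⟨x, hxB⟩
  set m : ℝ := sSup B with hm
  have hmB : m ∈ B := hBc.sSup_mem hBne
  have hxm : x ≤ m := le_csSup hBc.bddAbove hxB
  -- diameter bound on B
  have hdiam : ∀ z ∈ B, ∀ w ∈ B, |z - w| ≤ (C : ℝ) * C' * ε := by
    rintro z ⟨z', hz', rfl⟩ w ⟨w', hw', rfl⟩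
    have h1 : dist (f z') (f w') ≤ (C : ℝ) * ε := by
      refine le_trans (IsUltrametricDist.dist_triangle_max _ (f x₀) _) ?_
      have hz2 : dist (f z') (f x₀) ≤ (C:ℝ) * ε := by simpa using hz'
      have hw2 : dist (f w') (f x₀) ≤ (C:ℝ) * ε := by simpa using hw'
      exact max_le hz2 (by rwa [dist_comm] at hw2)
    calc |(z' : ℝ) - w'| = dist z' w' := rfl
      _ ≤ (C' : ℝ) * dist (f z') (f w') := hf' z' w'
      _ ≤ (C' : ℝ) * ((C : ℝ) * ε) := by
          exact mul_le_mul_of_nonneg_left h1 C'.coe_nonneg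
      _ = (C : ℝ) * C' * ε := by ring
  -- gap: no point of K in (m, m + ε)
  have hgap : ∀ z ∈ K, ¬ (m < z ∧ z < m + ε) := by
    rintro z hz ⟨h1, h2⟩
    obtain ⟨m', hm', hmv⟩ := hmB
    have hd : dist (⟨z, hz⟩ : K) m' ≤ ε := by
      simp only [Subtype.dist_eq, hmv, Real.dist_eq]
      rw [abs_of_pos (by linarith)]; linarith
    have hfd : dist (f ⟨z, hz⟩) (f m') ≤ (C : ℝ) * ε := by
      refine le_trans (hf.dist_le_mul _ _) ?_
      exact mul_le_mul_of_nonneg_left hd C.coe_nonneg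
    have hzB : z ∈ B := by
      refine ⟨⟨z, hz⟩, ?_, rfl⟩
      simp only [mem_preimage, mem_closedBall]
      refine le_trans (IsUltrametricDist.dist_triangle_max _ (f m') _) ?_
      exact max_le hfd (by simpa [dist_comm] using hm')
    have : z ≤ m := le_csSup hBc.bddAbove hzB
    linarith
  set ρ : ℝ := m - x + ε with hρ
  have hρpos : 0 < ρ := by simp only [hρ]; linarith
  have hρle : ρ ≤ ((C : ℝ) * C' + 1) * ε := by
    have := hdiam m hmB x hxB
    have h2 : m - x ≤ (C : ℝ) * C' * ε := le_trans (le_abs_self _) this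
    simp only [hρ]; nlinarith
  refine ⟨ρ, hρpos, hρle, ?_⟩
  -- measure estimate
  have hsub : K ∩ closedBall x ρ ⊆ Icc (x - ρ) m ∪ {m + ε} := by
    rintro z ⟨hzK, hzb⟩
    rw [mem_closedBall, Real.dist_eq, abs_le] at hzb
    rcases le_or_gt z m with h | h
    · exact Or.inl ⟨by linarith, h⟩
    · right
      have h2 : z ≤ m + ε := by simp only [hρ] at hzb; linarith
      rcases lt_or_eq_of_le h2 with h3 | h3
      · exact absurd ⟨h, h3⟩ (hgap z hzK)
      · exact h3
  have hmeas : volume (K ∩ closedBall x ρ) ≤ ENNReal.ofReal (2 * ρ - ε) := by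
    refine le_trans (measure_mono hsub) ?_
    refine le_trans (measure_union_le _ _) ?_
    simp only [Real.volume_Icc, Real.volume_singleton, add_zero]
    apply ENNReal.ofReal_le_ofReal
    simp only [hρ]; linarith
  rw [Real.volume_closedBall]
  refine ENNReal.div_le_of_le_mul ?_
  refine le_trans hmeas ?_
  set D : ℝ := 2 * ((C : ℝ) * C' + 1) with hD
  have hD2 : (2:ℝ) ≤ D := by
    have : (0:ℝ) ≤ (C : ℝ) * C' := by positivity
    simp only [hD]; linarith
  have hDpos : (0:ℝ) < D := by linarith
  have hDnn : (0:ℝ) ≤ 1 - 1 / D := by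
    have : 1 / D ≤ 1 := by rw [div_le_one hDpos]; linarith
    linarith
  rw [← ENNReal.ofReal_mul hDnn]
  apply ENNReal.ofReal_le_ofReal
  have h2ρ : 2 * ρ ≤ D * ε := by simp only [hD]; linarith
  have h1D : 1 / D * (2 * ρ) ≤ ε := by
    rw [div_mul_eq_mul_div, one_mul, div_le_iff₀ hDpos]; nlinarith
  nlinarith [h1D]

/-- in `ℝ`, a Cantor set of positive Lebesgue measure is not bilipschitz
equivalent to any ultrametric space. -/
theorem cantor_pos_measure_not_bilipschitz_ultrametric (K : Set ℝ) (hne : K.Nonempty)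
    (hK : IsCompact K) (htd : IsTotallyDisconnected K) (hperf : Perfect K)
    (hpos : 0 < MeasureTheory.volume K)
    (X : Type) [MetricSpace X] [IsUltrametricDist X] :
    ¬ ∃ f : K → X, Function.Bijective f ∧ (∃ C : NNReal, LipschitzWith C f) ∧
      (∃ C' : NNReal, ∀ a b : K, dist a b ≤ (C' : ℝ) * dist (f a) (f b)) := by
  rintro ⟨f, hbij, ⟨C, hf⟩, ⟨C', hf'⟩⟩
  -- density point
  have hdens := Besicovitch.ae_tendsto_measure_inter_div (volume : Measure ℝ) K
  have hres : volume.restrict K ≠ 0 := by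
    intro h
    have : volume K = 0 := by
      have := congrArg (fun μ : Measure ℝ => μ K) h
      simpa [Measure.restrict_apply hK.measurableSet] using this
    exact absurd this hpos.ne'
  have : (ae (volume.restrict K)).NeBot := ae_neBot.2 hres
  obtain ⟨x, hx, hxK⟩ := (hdens.and (ae_restrict_mem hK.measurableSet)).exists
  set D : ℝ := 2 * ((C : ℝ) * C' + 1) with hD
  have hCC : (0:ℝ) < (C : ℝ) * C' + 1 := by positivity
  have hDpos : (0:ℝ) < D := by simp only [hD]; linarith
  have hc : ENNReal.ofReal (1 - 1 / D) < 1 := by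
    rw [ENNReal.ofReal_lt_one]
    have : 0 < 1 / D := by positivity
    linarith
  have hev : ∀ᶠ ρ in nhdsWithin 0 (Set.Ioi (0:ℝ)),
      ENNReal.ofReal (1 - 1 / D) <
        volume (K ∩ Metric.closedBall x ρ) / volume (Metric.closedBall x ρ) :=
    hx.eventually (eventually_gt_nhds hc)
  obtain ⟨η, hη, hsub⟩ := mem_nhdsGT_iff_exists_Ioc_subset.mp hev
  obtain ⟨ρ, hρ0, hρle, hρrat⟩ := key_gap K hK X f C C' hf hf' x hxK
    (η / ((C : ℝ) * C' + 1)) (div_pos hη hCC)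
  have hρη : ρ ≤ η := by
    rw [mul_div_cancel₀ _ hCC.ne'] at hρle; exact hρle
  have := hsub ⟨hρ0, hρη⟩
  exact absurd this (not_lt.2 hρrat)
end
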